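/- arXiv:1412.5302 — 2 statements merged into one kernel-verified Lean document; each statement's English description precedes it below -/
import Mathlib

section
/- Let C be a two-layer comparator network on an even number n of channels whose first layer is maximal, whose second layer uses every channel, and whose graph representation G(C) is connected (i.e., C consists of a single connected cycle). If n < 12, then C is equivalent to its reflection C^R, i.e., G(C) and G(C^R) are isomorphic as edge-labeled directed graphs. -/
namespace SN

open scoped Classical

/-- A comparator on `n` channels: a pair of channels. -/
abbrev Comp (n : ℕ) := Fin n × Fin n

/-- A layer is a finite set of comparators. -/
abbrev Layer (n : ℕ) := Finset (Comp n)

/-- A comparator network is a sequence (list) of layers; its depth is the length. -/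
abbrev Net (n : ℕ) := List (Layer n)

/-- Each channel is used by at most one comparator of the layer. -/
def NoOverlap {n : ℕ} (L : Layer n) : Prop :=
  ∀ c ∈ L, ∀ c' ∈ L, c ≠ c' →
    c.1 ≠ c'.1 ∧ c.1 ≠ c'.2 ∧ c.2 ≠ c'.1 ∧ c.2 ≠ c'.2

/-- A (standard) layer: comparators `(i,j)` with `i < j`, channels pairwise disjoint. -/
def IsLayer {n : ℕ} (L : Layer n) : Prop :=
  (∀ c ∈ L, c.1 < c.2) ∧ NoOverlap L

/-- A generalized layer: comparators `(i,j)` with `i ≠ j` allowed in any order. -/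
def IsGenLayer {n : ℕ} (L : Layer n) : Prop :=
  (∀ c ∈ L, c.1 ≠ c.2) ∧ NoOverlap L

def IsNet {n : ℕ} (C : Net n) : Prop := ∀ L ∈ C, IsLayer L

def IsGenNet {n : ℕ} (C : Net n) : Prop := ∀ L ∈ C, IsGenLayer L

/-- Apply one layer to a Boolean vector: a comparator `(i,j)` puts the min
(`&&`) on channel `i` and the max (`||`) on channel `j`. -/
noncomputable def applyLayer {n : ℕ} (L : Layer n) (x : Fin n → Bool) : Fin n → Bool :=
  fun k =>
    if h1 : ∃ c ∈ L, c.1 = k then x h1.choose.1 && x h1.choose.2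
    else if h2 : ∃ c ∈ L, c.2 = k then x h2.choose.1 || x h2.choose.2
    else x k

/-- Run a comparator network on a Boolean input (layers applied in sequence). -/
noncomputable def run {n : ℕ} (C : Net n) (x : Fin n → Bool) : Fin n → Bool :=
  C.foldl (fun y L => applyLayer L y) x

/-- Ascendingly sorted Boolean vector. -/
def BSorted {n : ℕ} (x : Fin n → Bool) : Prop :=
  ∀ i j : Fin n, i ≤ j → x i ≤ x j

/-- A sorting network: a comparator network sorting every Boolean input. -/
def IsSortingNet {n : ℕ} (C : Net n) : Prop :=
  IsNet C ∧ ∀ x : Fin n → Bool, BSorted (run C x)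

/-- The set of outputs of a network on all Boolean inputs. -/
def outputs {n : ℕ} (C : Net n) : Set (Fin n → Bool) := Set.range (run C)

/-- Apply one layer to a vector of naturals. -/
noncomputable def applyLayerN {n : ℕ} (L : Layer n) (x : Fin n → ℕ) : Fin n → ℕ :=
  fun k =>
    if h1 : ∃ c ∈ L, c.1 = k then min (x h1.choose.1) (x h1.choose.2)
    else if h2 : ∃ c ∈ L, c.2 = k then max (x h2.choose.1) (x h2.choose.2)
    else x k

noncomputable def runN {n : ℕ} (C : Net n) (x : Fin n → ℕ) : Fin n → ℕ :=
  C.foldl (fun y L => applyLayerN L y) x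

def NSorted {n : ℕ} (x : Fin n → ℕ) : Prop :=
  ∀ i j : Fin n, i ≤ j → x i ≤ x j

/-- Permute the coordinates of a Boolean vector by `π` (channel `k`'s value
moves to channel `π k`). -/
def permVec {n : ℕ} (π : Equiv.Perm (Fin n)) (x : Fin n → Bool) : Fin n → Bool :=
  fun i => x (π.symm i)

/-- The image of a set of Boolean vectors under coordinate permutation by `π`. -/
def permSet {n : ℕ} (π : Equiv.Perm (Fin n)) (X : Set (Fin n → Bool)) :
    Set (Fin n → Bool) :=
  permVec π '' X

/-- The image `π(L)` of a layer under a permutation of channels. -/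
def permLayer {n : ℕ} (π : Equiv.Perm (Fin n)) (L : Layer n) : Layer n :=
  L.image fun c => (π c.1, π c.2)

/-- Channel `i` is used by some comparator of the layer `L`. -/
def usedIn {n : ℕ} (L : Layer n) (i : Fin n) : Prop := ∃ c ∈ L, c.1 = i ∨ c.2 = i

/-- Channels `i` and `j` are joined by a comparator of `L`. -/
def Joined {n : ℕ} (L : Layer n) (i j : Fin n) : Prop := (i, j) ∈ L ∨ (j, i) ∈ L

/-- `i` is the smaller channel of some comparator of `L` (a min-channel). -/
def MinChan {n : ℕ} (L : Layer n) (i : Fin n) : Prop := ∃ c ∈ L, c.1 = i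

/-- `i` is the larger channel of some comparator of `L` (a max-channel). -/
def MaxChan {n : ℕ} (L : Layer n) (i : Fin n) : Prop := ∃ c ∈ L, c.2 = i

/-- A two-layer network `[L1, L2]` is redundant if some comparator can be removed
so that the outputs of the result are a permutation of the original outputs. -/
def Redundant {n : ℕ} (L1 L2 : Layer n) : Prop :=
  ∃ π : Equiv.Perm (Fin n),
    (∃ c ∈ L1, outputs [L1.erase c, L2] = permSet π (outputs [L1, L2])) ∨
    (∃ c ∈ L2, outputs [L1, L2.erase c] = permSet π (outputs [L1, L2]))

/-- A two-layer network `[L1, L2]` is saturated if it is non-redundant and no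
comparator on two channels unused in the second layer can be added to the second
layer so as to make the output set a proper subset of a permutation of the
original output set. -/
def Saturated {n : ℕ} (L1 L2 : Layer n) : Prop :=
  ¬ Redundant L1 L2 ∧
  ¬ ∃ (c : Comp n) (π : Equiv.Perm (Fin n)),
      c.1 < c.2 ∧ ¬ usedIn L2 c.1 ∧ ¬ usedIn L2 c.2 ∧
      outputs [L1, insert c L2] ⊂ permSet π (outputs [L1, L2])

/-- Vertices of the graph representation of `C`: the comparators of `C`,
tagged with the index of the layer containing them. -/
def Vertex {n : ℕ} (C : Net n) := {p : ℕ × Comp n // p.2 ∈ C.getD p.1 ∅}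

/-- The channel carrying the min output (`b = false`, label 1) or max output
(`b = true`, label 2) of a comparator. -/
def outChan {n : ℕ} (c : Comp n) (b : Bool) : Fin n := if b then c.2 else c.1

/-- An edge with label `b` (1 for min, 2 for max) from comparator `u` to
comparator `v`: the corresponding output of `u` is an input of `v`, i.e. `v`
is the next comparator on that channel. -/
def Edge {n : ℕ} (C : Net n) (b : Bool) (u v : ℕ × Comp n) : Prop :=
  u.1 < v.1 ∧ (outChan u.2 b = v.2.1 ∨ outChan u.2 b = v.2.2) ∧
  ∀ m, u.1 < m → m < v.1 → ¬ usedIn (C.getD m ∅) (outChan u.2 b)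

/-- The graph representations of `C` and `D` are isomorphic: a bijection of
comparators preserving the labeled edges. -/
def GraphIso {n m : ℕ} (C : Net n) (D : Net m) : Prop :=
  ∃ f : Vertex C ≃ Vertex D,
    ∀ (b : Bool) (u v : Vertex C),
      Edge C b u.val v.val ↔ Edge D b (f u).val (f v).val

/-- The graph representation of `C` is connected. -/
def GraphConnected {n : ℕ} (C : Net n) : Prop :=
  ∀ u v : Vertex C,
    Relation.ReflTransGen
      (fun a b : Vertex C => ∃ ℓ : Bool, Edge C ℓ a.val b.val ∨ Edge C ℓ b.val a.val) u v

/-- Reflection of a comparator: `(i,j) ↦ (n-j+1, n-i+1)` (in 1-based terms). -/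
def reflectComp {n : ℕ} (c : Comp n) : Comp n := (c.2.rev, c.1.rev)

def reflectLayer {n : ℕ} (L : Layer n) : Layer n := L.image reflectComp

/-- Reflection `C^R` of a comparator network. -/
def reflect {n : ℕ} (C : Net n) : Net n := C.map reflectLayer

/-- The first layer `F_n = {(2i-1, 2i) : 1 ≤ i ≤ ⌊n/2⌋}` (0-indexed: `(2i, 2i+1)`). -/
def FLayer (n : ℕ) : Layer n :=
  Finset.univ.filter fun c : Comp n => c.1.val % 2 = 0 ∧ c.2.val = c.1.val + 1

/-- The two-layer networks with first layer `F_n`, parametrized by second layer. -/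
def SecondLayers (n : ℕ) := {L : Layer n // IsLayer L}

/-- The number `|R(G_n)|` of equivalence classes of two-layer networks with
first layer `F_n`, under graph isomorphism `≈`. -/
noncomputable def numClasses (n : ℕ) : ℕ :=
  Nat.card (Quot fun L L' : SecondLayers n =>
    GraphIso ([FLayer n, L.val] : Net n) ([FLayer n, L'.val] : Net n))

/-- Redundant two-layer networks with first layer `F_n`. -/
def RedLayers (n : ℕ) := {L : Layer n // IsLayer L ∧ Redundant (FLayer n) L}

/-- The number of equivalence classes of redundant two-layer networks with
first layer `F_n`, under graph isomorphism `≈`. -/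
noncomputable def numRedClasses (n : ℕ) : ℕ :=
  Nat.card (Quot fun L L' : RedLayers n =>
    GraphIso ([FLayer n, L.val] : Net n) ([FLayer n, L'.val] : Net n))


/-! ### Auxiliary development -/

section Aux17

variable {n : ℕ}

lemma joined_symm {L : Layer n} {i j : Fin n} (h : Joined L i j) : Joined L j i := h.symm

/-- The sorted pair on two channels. -/
def spair {n : ℕ} (i j : Fin n) : Comp n := if i < j then (i, j) else (j, i)

lemma spair_endpoints (i j a : Fin n) :
    (a = (spair i j).1 ∨ a = (spair i j).2) ↔ (a = i ∨ a = j) := by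
  unfold spair; split <;> tauto

lemma spair_mem {L : Layer n} (hL : IsLayer L) {i j : Fin n}
    (h : Joined L i j) : spair i j ∈ L := by
  rcases h with h | h
  · have hij := hL.1 _ h
    unfold spair; rw [if_pos hij]; exact h
  · have hij := hL.1 _ h
    unfold spair; rw [if_neg (lt_asymm hij)]; exact h

lemma comp_eq_of_shared {L : Layer n} (hL : IsLayer L) {c c' : Comp n} (hc : c ∈ L)
    (hc' : c' ∈ L)
    (h : c.1 = c'.1 ∨ c.1 = c'.2 ∨ c.2 = c'.1 ∨ c.2 = c'.2) : c = c' := by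
  by_contra hne
  obtain ⟨h1, h2, h3, h4⟩ := hL.2 c hc c' hc' hne
  tauto

lemma joined_unique {L : Layer n} (hL : IsLayer L) {i j j' : Fin n}
    (h : Joined L i j) (h' : Joined L i j') : j = j' := by
  rcases h with h | h <;> rcases h' with h' | h'
  · have := comp_eq_of_shared hL h h' (Or.inl rfl)
    exact congrArg Prod.snd this
  · have heq := comp_eq_of_shared hL h h' (Or.inr (Or.inl rfl))
    have h1 : i = j' := congrArg Prod.fst heq
    have h2 : j = i := congrArg Prod.snd heq
    exact h2.trans h1
  · have heq := comp_eq_of_shared hL h h' (Or.inr (Or.inr (Or.inl rfl)))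
    have h1 : j = i := congrArg Prod.fst heq
    have h2 : i = j' := congrArg Prod.snd heq
    exact h1.trans h2
  · have heq := comp_eq_of_shared hL h h' (Or.inr (Or.inr (Or.inr rfl)))
    exact congrArg Prod.fst heq

lemma joined_ne {L : Layer n} (hL : IsLayer L) {i j : Fin n} (h : Joined L i j) : i ≠ j := by
  rcases h with h | h
  · exact ne_of_lt (hL.1 _ h)
  · exact (ne_of_lt (hL.1 _ h)).symm

/-- The partner of a channel in a matching layer. -/
noncomputable def partner {n : ℕ} (L : Layer n) (i : Fin n) : Fin n :=
  if h : ∃ j, Joined L i j then h.choose else i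

lemma partner_joined {L : Layer n} {i : Fin n} (h : ∃ j, Joined L i j) :
    Joined L i (partner L i) := by
  unfold partner; rw [dif_pos h]; exact h.choose_spec

lemma usedIn_exists {L : Layer n} {i : Fin n} (h : usedIn L i) : ∃ j, Joined L i j := by
  obtain ⟨c, hc, hor⟩ := h
  rcases hor with h1 | h2
  · exact ⟨c.2, Or.inl (by rw [show (i, c.2) = c by rw [← h1]]; exact hc)⟩
  · exact ⟨c.1, Or.inr (by rw [show (c.1, i) = c by rw [← h2]]; exact hc)⟩

lemma partner_eq {L : Layer n} (hL : IsLayer L) {i j : Fin n} (h : Joined L i j) :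
    partner L i = j :=
  joined_unique hL (partner_joined ⟨j, h⟩) h

lemma partner_invol {L : Layer n} (hL : IsLayer L) {i : Fin n} (h : ∃ j, Joined L i j) :
    partner L (partner L i) = i :=
  partner_eq hL (joined_symm (partner_joined h))

lemma partner_ne {L : Layer n} (hL : IsLayer L) {i : Fin n} (h : ∃ j, Joined L i j) :
    partner L i ≠ i :=
  fun he => (joined_ne hL (partner_joined h)) he.symm

lemma all_used_of_card {L : Layer n} (hL : IsLayer L) (hcard : L.card = n / 2)
    (hn : Even n) : ∀ i, usedIn L i := by
  classical
  set s : Finset (Fin n) := L.biUnion (fun c => {c.1, c.2}) with hs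
  have hdisj : ∀ c ∈ L, ∀ c' ∈ L, c ≠ c' →
      Disjoint ({c.1, c.2} : Finset (Fin n)) {c'.1, c'.2} := by
    intro c hc c' hc' hne
    obtain ⟨h1, h2, h3, h4⟩ := hL.2 c hc c' hc' hne
    rw [Finset.disjoint_left]
    intro a ha ha'
    simp only [Finset.mem_insert, Finset.mem_singleton] at ha ha'
    rcases ha with rfl | rfl <;> rcases ha' with h | h <;> tauto
  have hcard2 : s.card = n := by
    rw [hs, Finset.card_biUnion hdisj]
    have : ∀ c ∈ L, ({c.1, c.2} : Finset (Fin n)).card = 2 := by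
      intro c hc
      rw [Finset.card_insert_of_notMem (by simp [ne_of_lt (hL.1 c hc)]),
        Finset.card_singleton]
    rw [Finset.sum_congr rfl this, Finset.sum_const, hcard, smul_eq_mul]
    have := hn
    rw [Nat.even_iff] at this
    omega
  have huniv : s = Finset.univ := by
    apply Finset.eq_univ_of_card
    rw [hcard2, Fintype.card_fin]
  intro i
  have : i ∈ s := by rw [huniv]; exact Finset.mem_univ i
  rw [hs, Finset.mem_biUnion] at this
  obtain ⟨c, hc, hi⟩ := this
  simp only [Finset.mem_insert, Finset.mem_singleton] at hi
  exact ⟨c, hc, by tauto⟩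

/-! ### Reflection lemmas -/

lemma mem_reflectLayer {L : Layer n} {i j : Fin n} :
    (i, j) ∈ reflectLayer L ↔ (j.rev, i.rev) ∈ L := by
  unfold reflectLayer reflectComp
  simp only [Finset.mem_image]
  constructor
  · rintro ⟨c, hc, hcij⟩
    have h1 : c.2.rev = i := congrArg Prod.fst hcij
    have h2 : c.1.rev = j := congrArg Prod.snd hcij
    have : c = (j.rev, i.rev) := by
      have e1 : c.1 = j.rev := by rw [← h2, Fin.rev_rev]
      have e2 : c.2 = i.rev := by rw [← h1, Fin.rev_rev]
      rw [← e1, ← e2]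
    rwa [← this]
  · intro h
    exact ⟨(j.rev, i.rev), h, by simp [Fin.rev_rev]⟩

lemma joined_reflectLayer {L : Layer n} {i j : Fin n} :
    Joined (reflectLayer L) i j ↔ Joined L j.rev i.rev := by
  unfold Joined
  rw [mem_reflectLayer, mem_reflectLayer]

lemma isLayer_reflectLayer {L : Layer n} (hL : IsLayer L) : IsLayer (reflectLayer L) := by
  constructor
  · intro c hc
    unfold reflectLayer reflectComp at hc
    rw [Finset.mem_image] at hc
    obtain ⟨d, hd, rfl⟩ := hc
    simpa [Fin.rev_lt_rev] using hL.1 d hd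
  · intro c hc c' hc' hne
    unfold reflectLayer reflectComp at hc hc'
    rw [Finset.mem_image] at hc hc'
    obtain ⟨d, hd, rfl⟩ := hc
    obtain ⟨d', hd', rfl⟩ := hc'
    have hdd : d ≠ d' := by
      rintro rfl; exact hne rfl
    obtain ⟨h1, h2, h3, h4⟩ := hL.2 d hd d' hd' hdd
    exact ⟨fun hh => h4 (Fin.rev_injective hh), fun hh => h3 (Fin.rev_injective hh),
      fun hh => h2 (Fin.rev_injective hh), fun hh => h1 (Fin.rev_injective hh)⟩

/-! ### Edge characterization for two-layer networks -/

lemma getD_two_layers_ge {L1 L2 : Layer n} {m : ℕ} (h : 2 ≤ m) :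
    ([L1, L2] : Net n).getD m ∅ = ∅ :=
  List.getD_eq_default _ _ (by simpa using h)

lemma vertex_lt_two {L1 L2 : Layer n} (v : Vertex ([L1, L2] : Net n)) : v.val.1 < 2 := by
  by_contra h
  have := v.property
  rw [getD_two_layers_ge (by omega)] at this
  exact absurd this (Finset.notMem_empty _)

lemma edge_char {L1 L2 : Layer n} {p q : ℕ × Comp n}
    (hp : p.2 ∈ ([L1, L2] : Net n).getD p.1 ∅) (hq : q.2 ∈ ([L1, L2] : Net n).getD q.1 ∅)
    (b : Bool) :
    Edge ([L1, L2] : Net n) b p q ↔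
      p.1 = 0 ∧ q.1 = 1 ∧ (outChan p.2 b = q.2.1 ∨ outChan p.2 b = q.2.2) := by
  have hp2 : p.1 < 2 := vertex_lt_two (⟨p, hp⟩ : Vertex ([L1, L2] : Net n))
  have hq2 : q.1 < 2 := vertex_lt_two (⟨q, hq⟩ : Vertex ([L1, L2] : Net n))
  unfold Edge
  constructor
  · rintro ⟨hlt, hmem, _⟩
    exact ⟨by omega, by omega, hmem⟩
  · rintro ⟨h0, h1, hmem⟩
    exact ⟨by omega, hmem, fun m hm1 hm2 => by omega⟩

lemma edge_shared {C : Net n} {b : Bool} {p q : ℕ × Comp n} (h : Edge C b p q) :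
    ∃ ch : Fin n, (ch = p.2.1 ∨ ch = p.2.2) ∧ (ch = q.2.1 ∨ ch = q.2.2) := by
  refine ⟨outChan p.2 b, ?_, h.2.1⟩
  unfold outChan; split <;> tauto

end Aux17

/-! ### The alternating walk -/

section Cyc

variable {n : ℕ}

/-- The alternating walk: step with `q2` from even positions, `q1` from odd. -/
def cyc (q1 q2 : Fin n → Fin n) (i0 : Fin n) : ℕ → Fin n
  | 0 => i0
  | t + 1 => (if t % 2 = 0 then q2 else q1) (cyc q1 q2 i0 t)

variable {q1 q2 : Fin n → Fin n} {i0 : Fin n}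

lemma cyc_succ (t : ℕ) :
    cyc q1 q2 i0 (t + 1) = (if t % 2 = 0 then q2 else q1) (cyc q1 q2 i0 t) := rfl

lemma cyc_even_succ (s : ℕ) : cyc q1 q2 i0 (2 * s + 1) = q2 (cyc q1 q2 i0 (2 * s)) := by
  rw [cyc_succ]; simp [Nat.mul_mod_right]

lemma cyc_odd_succ (s : ℕ) : cyc q1 q2 i0 (2 * s + 2) = q1 (cyc q1 q2 i0 (2 * s + 1)) := by
  rw [show 2 * s + 2 = (2 * s + 1) + 1 by ring, cyc_succ]
  simp [Nat.add_mod, Nat.mul_mod_right]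

lemma cyc_two_mul (s : ℕ) : cyc q1 q2 i0 (2 * s) = (q1 ∘ q2)^[s] i0 := by
  induction s with
  | zero => rfl
  | succ s ih =>
    rw [show 2 * (s + 1) = 2 * s + 2 by ring, cyc_odd_succ, cyc_even_succ, ih,
      Function.iterate_succ_apply']
    rfl

variable (hq1 : Function.Involutive q1) (hq2 : Function.Involutive q2)

include hq1 hq2 in
lemma cyc_pal {i j : ℕ} (hpar : (i + j) % 2 = 1) (h : cyc q1 q2 i0 i = cyc q1 q2 i0 j) :
    ∀ d, d ≤ j → cyc q1 q2 i0 (i + d) = cyc q1 q2 i0 (j - d) := by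
  intro d
  induction d with
  | zero => intro _; simpa using h
  | succ d ih =>
    intro hdj
    have ih' := ih (by omega)
    have hstep1 : cyc q1 q2 i0 (i + d + 1) =
        (if (i + d) % 2 = 0 then q2 else q1) (cyc q1 q2 i0 (i + d)) := cyc_succ _
    have hstep2 : cyc q1 q2 i0 (j - d) =
        (if (j - d - 1) % 2 = 0 then q2 else q1) (cyc q1 q2 i0 (j - d - 1)) := by
      rw [show j - d = (j - d - 1) + 1 by omega]
      exact cyc_succ _
    have hpar2 : (j - d - 1) % 2 = (i + d) % 2 := by omega
    rw [hpar2] at hstep2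
    rw [show i + (d + 1) = i + d + 1 by ring, hstep1, ih', hstep2,
      show j - (d + 1) = j - d - 1 by omega]
    by_cases hc : (i + d) % 2 = 0
    · rw [if_pos hc]; exact hq2 _
    · rw [if_neg hc]; exact hq1 _

variable (hf1 : ∀ i, q1 i ≠ i) (hf2 : ∀ i, q2 i ≠ i)

include hf1 hf2 in
lemma cyc_adj_ne (t : ℕ) : cyc q1 q2 i0 (t + 1) ≠ cyc q1 q2 i0 t := by
  rw [cyc_succ]
  by_cases hc : t % 2 = 0
  · rw [if_pos hc]; exact hf2 _
  · rw [if_neg hc]; exact hf1 _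

include hq1 hq2 hf1 hf2 in
lemma cyc_cross_ne {a b : ℕ} (hpar : (a + b) % 2 = 1) :
    cyc q1 q2 i0 a ≠ cyc q1 q2 i0 b := by
  intro h
  rcases Nat.lt_or_ge a b with hab | hab
  · have hp := cyc_pal hq1 hq2 hpar h ((b - a - 1) / 2) (by omega)
    rw [show b - (b - a - 1) / 2 = a + (b - a - 1) / 2 + 1 by omega] at hp
    exact cyc_adj_ne hf1 hf2 _ hp.symm
  · have hba : b < a := by omega
    have hpar' : (b + a) % 2 = 1 := by omega
    have hp := cyc_pal hq1 hq2 hpar' h.symm ((a - b - 1) / 2) (by omega)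
    rw [show a - (a - b - 1) / 2 = b + (a - b - 1) / 2 + 1 by omega] at hp
    exact cyc_adj_ne hf1 hf2 _ hp.symm

end Cyc

/-! ### Periodicity of the walk -/

section Period

variable {n : ℕ} {q1 q2 : Fin n → Fin n} {i0 : Fin n}
variable (hq1 : Function.Involutive q1) (hq2 : Function.Involutive q2)

include hq1 hq2 in
lemma cyc_period_pos : 0 < Function.minimalPeriod (q1 ∘ q2) i0 := by
  set e : Equiv.Perm (Fin n) := (hq2.toPerm q2).trans (hq1.toPerm q1) with he
  have hN : 0 < orderOf e := orderOf_pos e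
  apply Function.IsPeriodicPt.minimalPeriod_pos hN
  show (q1 ∘ q2)^[orderOf e] i0 = i0
  have hco : (q1 ∘ q2) = ⇑e := rfl
  rw [hco, Equiv.Perm.iterate_eq_pow, pow_orderOf_eq_one e]
  rfl

variable {m : ℕ} (hm : m = Function.minimalPeriod (q1 ∘ q2) i0)

include hm in
lemma cyc_add_period (t : ℕ) : cyc q1 q2 i0 (t + 2 * m) = cyc q1 q2 i0 t := by
  induction t with
  | zero =>
    show cyc q1 q2 i0 (0 + 2 * m) = i0
    rw [Nat.zero_add, cyc_two_mul, hm, Function.iterate_minimalPeriod]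
  | succ t ih =>
    have hpar : (t + 2 * m) % 2 = t % 2 := by omega
    rw [show t + 1 + 2 * m = (t + 2 * m) + 1 by ring, cyc_succ, cyc_succ, ih, hpar]

include hm in
lemma cyc_add_mul_period (t s : ℕ) : cyc q1 q2 i0 (t + 2 * m * s) = cyc q1 q2 i0 t := by
  induction s with
  | zero => rfl
  | succ s ih =>
    rw [show t + 2 * m * (s + 1) = (t + 2 * m * s) + 2 * m by ring, cyc_add_period hm, ih]

include hm hq1 hq2 in
lemma cyc_mod (t : ℕ) : cyc q1 q2 i0 t = cyc q1 q2 i0 (t % (2 * m)) := by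
  have hmpos : 0 < m := hm ▸ cyc_period_pos hq1 hq2
  conv_lhs => rw [show t = t % (2 * m) + 2 * m * (t / (2 * m)) by
    rw [Nat.mod_add_div t (2 * m)]]
  rw [cyc_add_mul_period hm]

variable (hf1 : ∀ i, q1 i ≠ i) (hf2 : ∀ i, q2 i ≠ i)

include hq1 hq2 hf1 hf2 hm in
lemma cyc_inj_lt {a b : ℕ} (ha : a < 2 * m) (hb : b < 2 * m)
    (h : cyc q1 q2 i0 a = cyc q1 q2 i0 b) : a = b := by
  have hpar : a % 2 = b % 2 := by
    by_contra hab
    exact cyc_cross_ne hq1 hq2 hf1 hf2 (by omega) h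
  have key : ∀ a' b' : ℕ, a' < m → b' < m →
      cyc q1 q2 i0 (2 * a') = cyc q1 q2 i0 (2 * b') → a' = b' := by
    intro a' b' ha' hb' hcyc
    rw [cyc_two_mul, cyc_two_mul] at hcyc
    exact Function.iterate_injOn_Iio_minimalPeriod
      (Set.mem_Iio.2 (hm ▸ ha')) (Set.mem_Iio.2 (hm ▸ hb')) hcyc
  by_cases hae : a % 2 = 0
  · have h2 : cyc q1 q2 i0 (2 * (a / 2)) = cyc q1 q2 i0 (2 * (b / 2)) := by
      rw [show 2 * (a / 2) = a by omega, show 2 * (b / 2) = b by omega]; exact h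
    have := key _ _ (by omega) (by omega) h2
    omega
  · have ha1 : a = 2 * (a / 2) + 1 := by omega
    have hb1 : b = 2 * (b / 2) + 1 := by omega
    rw [ha1, hb1, cyc_even_succ, cyc_even_succ] at h
    have := key _ _ (by omega) (by omega) (hq2.injective h)
    omega

end Period

/-! ### Enumerating a two-layer single-cycle network -/

/-- The word of the cycle. -/
def wrd {n : ℕ} (x : ℕ → Fin n) (t : ℕ) : Bool := decide (x (2 * t + 1) < x (2 * t + 2))

/-- The `t`-th first-layer comparator along the cycle. -/
def cprC {n : ℕ} (x : ℕ → Fin n) (t : ℕ) : Comp n := spair (x (2 * t + 1)) (x (2 * t + 2))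

/-- The `t`-th second-layer comparator along the cycle. -/
def dprC {n : ℕ} (x : ℕ → Fin n) (t : ℕ) : Comp n := spair (x (2 * t)) (x (2 * t + 1))

section Enum
set_option linter.unusedSectionVars false

variable {n k : ℕ} {L1 L2 : Layer n} {x : ℕ → Fin n}
variable (hn : n = 2 * k) (hk : 0 < k)
  (h1 : IsLayer L1) (h2 : IsLayer L2)
  (hx : ∀ a b : ℕ, x a = x b ↔ a ≡ b [MOD n])
  (hxs : ∀ i : Fin n, ∃ t, x t = i)
  (hx1 : ∀ t, Joined L1 (x (2 * t + 1)) (x (2 * t + 2)))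
  (hx2 : ∀ t, Joined L2 (x (2 * t)) (x (2 * t + 1)))

include hn hk in
lemma parity_nmodeq (a b : ℕ) : ¬ (2 * a + 1 ≡ 2 * b [MOD n]) := by
  intro hmod
  have h2 : 2 * a + 1 ≡ 2 * b [MOD 2] := hmod.of_dvd ⟨k, hn⟩
  unfold Nat.ModEq at h2
  omega

include hn in
lemma modeq_dbl (a b : ℕ) : 2 * a ≡ 2 * b [MOD n] ↔ a ≡ b [MOD k] := by
  rw [hn]
  unfold Nat.ModEq
  rw [Nat.mul_mod_mul_left, Nat.mul_mod_mul_left]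
  omega

include h1 hx1 in
lemma mem_cprC (t : ℕ) : cprC x t ∈ L1 := spair_mem h1 (hx1 t)

include h2 hx2 in
lemma mem_dprC (t : ℕ) : dprC x t ∈ L2 := spair_mem h2 (hx2 t)

lemma outChan_cprC (t : ℕ) (b : Bool) :
    outChan (cprC x t) b = x (2 * t + 1 + (if wrd x t = b then 1 else 0)) := by
  unfold outChan cprC spair wrd
  by_cases hlt : x (2 * t + 1) < x (2 * t + 2) <;> cases b <;>
    simp [hlt]

include hn hk hx in
lemma cprC_inj {a b : ℕ} (h : cprC x a = cprC x b) : a ≡ b [MOD k] := by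
  have hmem : x (2 * a + 1) = (cprC x b).1 ∨ x (2 * a + 1) = (cprC x b).2 := by
    rw [← h]
    exact (spair_endpoints _ _ _).2 (Or.inl rfl)
  unfold cprC at hmem
  rw [spair_endpoints] at hmem
  rcases hmem with hmem | hmem
  · rw [hx] at hmem
    exact (modeq_dbl hn a b).1 (Nat.ModEq.add_right_cancel' 1 hmem)
  · rw [hx] at hmem
    exact absurd (by rw [show 2 * b + 2 = 2 * (b + 1) by ring] at hmem; exact hmem)
      (parity_nmodeq hn hk a (b + 1))

include hn hk hx in
lemma dprC_inj {a b : ℕ} (h : dprC x a = dprC x b) : a ≡ b [MOD k] := by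
  have hmem : x (2 * a) = (dprC x b).1 ∨ x (2 * a) = (dprC x b).2 := by
    rw [← h]
    exact (spair_endpoints _ _ _).2 (Or.inl rfl)
  unfold dprC at hmem
  rw [spair_endpoints] at hmem
  rcases hmem with hmem | hmem
  · rw [hx] at hmem
    exact (modeq_dbl hn a b).1 hmem
  · rw [hx] at hmem
    exact absurd hmem.symm (parity_nmodeq hn hk b a)

include hn hx in
lemma cprC_congr {a b : ℕ} (hab : a ≡ b [MOD k]) : cprC x a = cprC x b := by
  have e1 : x (2 * a + 1) = x (2 * b + 1) := by
    rw [hx]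
    exact ((modeq_dbl hn a b).2 hab).add_right 1
  have e2 : x (2 * a + 2) = x (2 * b + 2) := by
    rw [hx]
    exact ((modeq_dbl hn a b).2 hab).add_right 2
  unfold cprC
  rw [e1, e2]

include hn hx in
lemma dprC_congr {a b : ℕ} (hab : a ≡ b [MOD k]) : dprC x a = dprC x b := by
  have e1 : x (2 * a) = x (2 * b) := by
    rw [hx]; exact (modeq_dbl hn a b).2 hab
  have e2 : x (2 * a + 1) = x (2 * b + 1) := by
    rw [hx]; exact ((modeq_dbl hn a b).2 hab).add_right 1
  unfold dprC
  rw [e1, e2]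

include hn hx in
lemma wrd_congr {a b : ℕ} (hab : a ≡ b [MOD k]) : wrd x a = wrd x b := by
  have e1 : x (2 * a + 1) = x (2 * b + 1) := by
    rw [hx]; exact ((modeq_dbl hn a b).2 hab).add_right 1
  have e2 : x (2 * a + 2) = x (2 * b + 2) := by
    rw [hx]; exact ((modeq_dbl hn a b).2 hab).add_right 2
  unfold wrd
  rw [e1, e2]

include hn hk h1 h2 hx hx1 hx2 in
lemma edge_cprC_dprC (b : Bool) (t u : ℕ) :
    Edge ([L1, L2] : Net n) b (0, cprC x t) (1, dprC x u) ↔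
      u ≡ t + (if wrd x t = b then 1 else 0) [MOD k] := by
  have hp : ((0 : ℕ), cprC x t).2 ∈ ([L1, L2] : Net n).getD ((0 : ℕ), cprC x t).1 ∅ :=
    mem_cprC h1 hx1 t
  have hq : ((1 : ℕ), dprC x u).2 ∈ ([L1, L2] : Net n).getD ((1 : ℕ), dprC x u).1 ∅ :=
    mem_dprC h2 hx2 u
  rw [edge_char hp hq b]
  simp only [true_and, show ((0 : ℕ), cprC x t).1 = 0 from rfl,
    show ((1 : ℕ), dprC x u).1 = 1 from rfl]
  have hout : outChan ((0:ℕ), cprC x t).2 b = x (2 * t + 1 + (if wrd x t = b then 1 else 0)) :=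
    outChan_cprC t b
  rw [hout]
  have hend := spair_endpoints (x (2 * u)) (x (2 * u + 1))
      (x (2 * t + 1 + (if wrd x t = b then 1 else 0)))
  unfold dprC
  rw [show ((x (2*t+1+(if wrd x t = b then 1 else 0))) = (spair (x (2*u)) (x (2*u+1))).1 ∨
      (x (2*t+1+(if wrd x t = b then 1 else 0))) = (spair (x (2*u)) (x (2*u+1))).2) ↔ _ from hend]
  rw [hx, hx]
  by_cases hw : wrd x t = b
  · rw [if_pos hw]
    constructor
    · rintro (hmod | hmod)
      · rw [show 2 * t + 1 + 1 = 2 * (t + 1) by ring] at hmod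
        exact ((modeq_dbl hn (t+1) u).1 hmod).symm.trans (by rfl)
      · exact absurd (by rw [show 2*t+1+1 = 2*(t+1) by ring] at hmod; exact hmod.symm)
          (parity_nmodeq hn hk u (t+1))
    · intro hu
      left
      rw [show 2 * t + 1 + 1 = 2 * (t + 1) by ring]
      exact (modeq_dbl hn (t+1) u).2 hu.symm
  · rw [if_neg hw]
    simp only [Nat.add_zero]
    constructor
    · rintro (hmod | hmod)
      · exact absurd hmod (parity_nmodeq hn hk t u)
      · have h2t : 2 * t ≡ 2 * u [MOD n] := Nat.ModEq.add_right_cancel' 1 hmod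
        exact ((modeq_dbl hn t u).1 h2t).symm
    · intro hu
      right
      exact (((modeq_dbl hn t u).2 hu.symm).add_right 1)

include hn hk h1 hx hxs in
lemma cprC_surj {c : Comp n} (hc : c ∈ L1) (hx1' : ∀ t, Joined L1 (x (2*t+1)) (x (2*t+2))) :
    ∃ t, t < k ∧ c = cprC x t := by
  have hn0 : 0 < n := by omega
  obtain ⟨j0, hj0⟩ := hxs c.1
  set j := j0 % n with hj
  have hxj : x j = c.1 := by
    rw [← hj0, hx]
    exact (Nat.mod_modEq j0 n)
  have hjn : j < n := Nat.mod_lt _ hn0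
  by_cases hpar : j % 2 = 1
  · -- j = 2*(j/2) + 1
    refine ⟨j / 2, by omega, ?_⟩
    apply comp_eq_of_shared h1 hc (mem_cprC h1 hx1' (j / 2))
    have : c.1 = x (2 * (j / 2) + 1) := by rw [show 2 * (j/2) + 1 = j by omega, hxj]
    have hm := (spair_endpoints (x (2*(j/2)+1)) (x (2*(j/2)+2)) c.1).2 (Or.inl this)
    unfold cprC
    rcases hm with hm | hm
    · exact Or.inl hm
    · exact Or.inr (Or.inl hm)
  · -- j = 2*u even
    set u := j / 2 with hu
    set t := (u + k - 1) % k with ht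
    refine ⟨t, Nat.mod_lt _ hk, ?_⟩
    apply comp_eq_of_shared h1 hc (mem_cprC h1 hx1' t)
    have hmt : t + 1 ≡ u [MOD k] := by
      have h1' : t ≡ u + k - 1 [MOD k] := Nat.mod_modEq _ _
      have h2' : t + 1 ≡ u + k - 1 + 1 [MOD k] := h1'.add_right 1
      rw [show u + k - 1 + 1 = u + k by omega] at h2'
      exact h2'.trans (Nat.add_mod_right u k)
    have : c.1 = x (2 * t + 2) := by
      rw [← hxj, hx, show 2 * t + 2 = 2 * (t + 1) by ring, show j = 2 * u by omega]
      exact ((modeq_dbl hn (t+1) u).2 hmt).symm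
    have hm := (spair_endpoints (x (2*t+1)) (x (2*t+2)) c.1).2 (Or.inr this)
    unfold cprC
    rcases hm with hm | hm
    · exact Or.inl hm
    · exact Or.inr (Or.inl hm)

include hn hk h2 hx hxs in
lemma dprC_surj {d : Comp n} (hd : d ∈ L2) (hx2' : ∀ t, Joined L2 (x (2*t)) (x (2*t+1))) :
    ∃ t, t < k ∧ d = dprC x t := by
  have hn0 : 0 < n := by omega
  obtain ⟨j0, hj0⟩ := hxs d.1
  set j := j0 % n with hj
  have hxj : x j = d.1 := by
    rw [← hj0, hx]
    exact (Nat.mod_modEq j0 n)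
  have hjn : j < n := Nat.mod_lt _ hn0
  by_cases hpar : j % 2 = 1
  · refine ⟨j / 2, by omega, ?_⟩
    apply comp_eq_of_shared h2 hd (mem_dprC h2 hx2' (j / 2))
    have : d.1 = x (2 * (j / 2) + 1) := by rw [show 2 * (j/2) + 1 = j by omega, hxj]
    have hm := (spair_endpoints (x (2*(j/2))) (x (2*(j/2)+1)) d.1).2 (Or.inr this)
    unfold dprC
    rcases hm with hm | hm
    · exact Or.inl hm
    · exact Or.inr (Or.inl hm)
  · refine ⟨j / 2, by omega, ?_⟩
    apply comp_eq_of_shared h2 hd (mem_dprC h2 hx2' (j / 2))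
    have : d.1 = x (2 * (j / 2)) := by rw [show 2 * (j/2) = j by omega, hxj]
    have hm := (spair_endpoints (x (2*(j/2))) (x (2*(j/2)+1)) d.1).2 (Or.inl this)
    unfold dprC
    rcases hm with hm | hm
    · exact Or.inl hm
    · exact Or.inr (Or.inl hm)

end Enum

lemma word_sym (k : ℕ) (hk : 1 ≤ k) (hk5 : k ≤ 5) :
    ∀ w : ZMod k → Bool, ∃ s : ZMod k, ∀ t, w (s - t) = w t := by
  interval_cases k <;> decide


lemma zmod_modeq_iff {k : ℕ} [NeZero k] (t u : ZMod k) (e : ℕ) :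
    u.val ≡ t.val + e [MOD k] ↔ u = t + (e : ZMod k) := by
  have h1 : ((u.val : ℕ) : ZMod k) = u := by rw [ZMod.natCast_val, ZMod.cast_id]
  have h2 : ((t.val : ℕ) : ZMod k) = t := by rw [ZMod.natCast_val, ZMod.cast_id]
  rw [← ZMod.natCast_eq_natCast_iff, Nat.cast_add, h1, h2]

lemma edge_00_false {n : ℕ} {L1 L2 : Layer n} {c c' : Comp n} (hc : c ∈ L1) (hc' : c' ∈ L1)
    (b : Bool) : ¬ Edge ([L1, L2] : Net n) b ((0:ℕ), c) ((0:ℕ), c') := by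
  intro h
  have := ((edge_char (p := ((0:ℕ), c)) (q := ((0:ℕ), c')) hc hc' b).1 h).2.1
  omega

lemma edge_10_false {n : ℕ} {L1 L2 : Layer n} {d : Comp n} {c : Comp n} (hd : d ∈ L2)
    (hc : c ∈ L1) (b : Bool) : ¬ Edge ([L1, L2] : Net n) b ((1:ℕ), d) ((0:ℕ), c) := by
  intro h
  have := ((edge_char (p := ((1:ℕ), d)) (q := ((0:ℕ), c)) hd hc b).1 h).1
  omega

lemma edge_11_false {n : ℕ} {L1 L2 : Layer n} {d d' : Comp n} (hd : d ∈ L2) (hd' : d' ∈ L2)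
    (b : Bool) : ¬ Edge ([L1, L2] : Net n) b ((1:ℕ), d) ((1:ℕ), d') := by
  intro h
  have := ((edge_char (p := ((1:ℕ), d)) (q := ((1:ℕ), d')) hd hd' b).1 h).1
  omega

/-- Enumeration of the vertices of a two-layer single-cycle network. -/
def vmap {n : ℕ} (k : ℕ) (L1 L2 : Layer n) (x : ℕ → Fin n)
    (hm1 : ∀ t : ℕ, cprC x t ∈ L1) (hm2 : ∀ t : ℕ, dprC x t ∈ L2) :
    ZMod k ⊕ ZMod k → Vertex ([L1, L2] : Net n) := fun i =>
  match i with
  | .inl t => ⟨((0:ℕ), cprC x t.val), hm1 t.val⟩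
  | .inr u => ⟨((1:ℕ), dprC x u.val), hm2 u.val⟩

lemma vmap_bij {n k : ℕ} [NeZero k] (hn : n = 2 * k) (hk : 0 < k)
    {L1 L2 : Layer n} {x : ℕ → Fin n}
    (h1 : IsLayer L1) (h2 : IsLayer L2)
    (hx : ∀ a b : ℕ, x a = x b ↔ a ≡ b [MOD n])
    (hxs : ∀ i : Fin n, ∃ t, x t = i)
    (hx1 : ∀ t, Joined L1 (x (2 * t + 1)) (x (2 * t + 2)))
    (hx2 : ∀ t, Joined L2 (x (2 * t)) (x (2 * t + 1)))
    (hm1 : ∀ t : ℕ, cprC x t ∈ L1) (hm2 : ∀ t : ℕ, dprC x t ∈ L2) :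
    Function.Bijective (vmap k L1 L2 x hm1 hm2) := by
  constructor
  · rintro (t | t) (u | u) h
    · have hval : cprC x t.val = cprC x u.val :=
        congrArg (fun v => v.val.2) h
      have hmod := cprC_inj hn hk hx hval
      unfold Nat.ModEq at hmod
      rw [Nat.mod_eq_of_lt (ZMod.val_lt t), Nat.mod_eq_of_lt (ZMod.val_lt u)] at hmod
      exact congrArg Sum.inl (ZMod.val_injective k hmod)
    · have h0 := congrArg (fun v => v.val.1) h
      simp only [vmap] at h0
      omega
    · have h0 := congrArg (fun v => v.val.1) h
      simp only [vmap] at h0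
      omega
    · have hval : dprC x t.val = dprC x u.val :=
        congrArg (fun v => v.val.2) h
      have hmod := dprC_inj hn hk hx hval
      unfold Nat.ModEq at hmod
      rw [Nat.mod_eq_of_lt (ZMod.val_lt t), Nat.mod_eq_of_lt (ZMod.val_lt u)] at hmod
      exact congrArg Sum.inr (ZMod.val_injective k hmod)
  · rintro ⟨⟨i, c⟩, hv⟩
    have hi2 : i < 2 := vertex_lt_two ⟨(i, c), hv⟩
    interval_cases i
    · have hc : c ∈ L1 := hv
      obtain ⟨t, htk, rfl⟩ := cprC_surj hn hk h1 hx hxs hc hx1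
      refine ⟨Sum.inl ((t : ℕ) : ZMod k), Subtype.ext ?_⟩
      show ((0:ℕ), cprC x ((t : ZMod k)).val) = ((0:ℕ), cprC x t)
      rw [ZMod.val_cast_of_lt htk]
    · have hc : c ∈ L2 := hv
      obtain ⟨t, htk, rfl⟩ := dprC_surj hn hk h2 hx hxs hc hx2
      refine ⟨Sum.inr ((t : ℕ) : ZMod k), Subtype.ext ?_⟩
      show ((1:ℕ), dprC x ((t : ZMod k)).val) = ((1:ℕ), dprC x t)
      rw [ZMod.val_cast_of_lt htk]

lemma iso_main {n k : ℕ} (hn : n = 2 * k) (hk : 0 < k) (hk5 : k ≤ 5)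
    (L1 L2 : Layer n) (h1 : IsLayer L1) (h2 : IsLayer L2)
    (x : ℕ → Fin n)
    (hx : ∀ a b : ℕ, x a = x b ↔ a ≡ b [MOD n])
    (hxs : ∀ i : Fin n, ∃ t, x t = i)
    (hx1 : ∀ t, Joined L1 (x (2 * t + 1)) (x (2 * t + 2)))
    (hx2 : ∀ t, Joined L2 (x (2 * t)) (x (2 * t + 1))) :
    GraphIso ([L1, L2] : Net n) ([reflectLayer L1, reflectLayer L2] : Net n) := by
  haveI : NeZero k := ⟨by omega⟩
  have g1 : IsLayer (reflectLayer L1) := isLayer_reflectLayer h1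
  have g2 : IsLayer (reflectLayer L2) := isLayer_reflectLayer h2
  set y : ℕ → Fin n := fun t => (x t).rev with hy_def
  have hy : ∀ a b : ℕ, y a = y b ↔ a ≡ b [MOD n] := by
    intro a b
    show (x a).rev = (x b).rev ↔ _
    rw [Fin.rev_inj]
    exact hx a b
  have hys : ∀ i : Fin n, ∃ t, y t = i := by
    intro i
    obtain ⟨t, ht⟩ := hxs i.rev
    exact ⟨t, by show (x t).rev = i; rw [ht, Fin.rev_rev]⟩
  have hy1 : ∀ t, Joined (reflectLayer L1) (y (2 * t + 1)) (y (2 * t + 2)) := by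
    intro t
    show Joined (reflectLayer L1) (x (2 * t + 1)).rev (x (2 * t + 2)).rev
    rw [joined_reflectLayer, Fin.rev_rev, Fin.rev_rev]
    exact joined_symm (hx1 t)
  have hy2 : ∀ t, Joined (reflectLayer L2) (y (2 * t)) (y (2 * t + 1)) := by
    intro t
    show Joined (reflectLayer L2) (x (2 * t)).rev (x (2 * t + 1)).rev
    rw [joined_reflectLayer, Fin.rev_rev, Fin.rev_rev]
    exact joined_symm (hx2 t)
  have hxne : ∀ t : ℕ, x (2 * t + 1) ≠ x (2 * t + 2) := by
    intro t h
    rw [hx] at h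
    have hdvd := h.dvd
    rw [show ((2 * t + 2 : ℕ) : ℤ) - ((2 * t + 1 : ℕ) : ℤ) = 1 by push_cast; ring] at hdvd
    have := Int.le_of_dvd one_pos hdvd
    omega
  have hwflip : ∀ t, wrd y t = ! wrd x t := by
    intro t
    unfold wrd
    show decide ((x (2*t+1)).rev < (x (2*t+2)).rev) = _
    rcases lt_or_gt_of_ne (hxne t) with hlt | hlt
    · have l1 : ¬ ((x (2*t+1)).rev < (x (2*t+2)).rev) := by
        rw [Fin.rev_lt_rev]; exact lt_asymm hlt
      rw [decide_eq_false l1, decide_eq_true hlt]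
      rfl
    · have l1 : (x (2*t+1)).rev < (x (2*t+2)).rev := by
        rw [Fin.rev_lt_rev]; exact hlt
      rw [decide_eq_true l1, decide_eq_false (lt_asymm hlt)]
      rfl
  obtain ⟨s, hsym⟩ := word_sym k hk hk5 (fun t : ZMod k => wrd x t.val)
  -- enumerations
  have hm1 : ∀ t : ℕ, cprC x t ∈ L1 := mem_cprC h1 hx1
  have hm2 : ∀ t : ℕ, dprC x t ∈ L2 := mem_dprC h2 hx2
  have hm1' : ∀ t : ℕ, cprC y t ∈ reflectLayer L1 := mem_cprC g1 hy1
  have hm2' : ∀ t : ℕ, dprC y t ∈ reflectLayer L2 := mem_dprC g2 hy2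
  set E1 : (ZMod k ⊕ ZMod k) ≃ Vertex ([L1, L2] : Net n) :=
    Equiv.ofBijective _ (vmap_bij hn hk h1 h2 hx hxs hx1 hx2 hm1 hm2) with hE1
  set E2 : (ZMod k ⊕ ZMod k) ≃ Vertex ([reflectLayer L1, reflectLayer L2] : Net n) :=
    Equiv.ofBijective _ (vmap_bij hn hk g1 g2 hy hys hy1 hy2 hm1' hm2') with hE2
  set σ : (ZMod k ⊕ ZMod k) ≃ (ZMod k ⊕ ZMod k) :=
    Equiv.sumCongr (Equiv.subLeft s) (Equiv.subLeft (s + 1)) with hσ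
  refine ⟨E1.symm.trans (σ.trans E2), ?_⟩
  intro b u v
  obtain ⟨i, rfl⟩ := E1.surjective u
  obtain ⟨j, rfl⟩ := E1.surjective v
  have hfE : ∀ i, (E1.symm.trans (σ.trans E2)) (E1 i) = E2 (σ i) := by
    intro i
    rw [Equiv.trans_apply, Equiv.symm_apply_apply, Equiv.trans_apply]
  rw [hfE i, hfE j]
  cases i with
  | inl t =>
    cases j with
    | inl t' =>
      apply iff_of_false
      · exact edge_00_false (hm1 t.val) (hm1 t'.val) b
      · exact edge_00_false (hm1' (s - t).val) (hm1' (s - t').val) b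
    | inr u' =>
      show Edge ([L1, L2] : Net n) b ((0:ℕ), cprC x t.val) ((1:ℕ), dprC x u'.val) ↔
        Edge ([reflectLayer L1, reflectLayer L2] : Net n) b
          ((0:ℕ), cprC y (s - t).val) ((1:ℕ), dprC y ((s + 1) - u').val)
      rw [edge_cprC_dprC hn hk h1 h2 hx hx1 hx2 b t.val u'.val,
        edge_cprC_dprC hn hk g1 g2 hy hy1 hy2 b (s - t).val ((s + 1) - u').val,
        zmod_modeq_iff, zmod_modeq_iff]
      have hwy : wrd y ((s - t).val) = ! wrd x t.val := by
        rw [hwflip]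
        exact congrArg Bool.not (hsym t)
      rw [hwy]
      by_cases hw : wrd x t.val = b
      · rw [if_pos hw, if_neg (by rw [hw]; cases b <;> simp)]
        rw [Nat.cast_one, Nat.cast_zero, add_zero]
        constructor <;> intro h <;> linear_combination -h
      · rw [if_neg hw, if_pos (by revert hw; cases (wrd x t.val) <;> cases b <;> simp)]
        rw [Nat.cast_one, Nat.cast_zero, add_zero]
        constructor <;> intro h <;> linear_combination -h
  | inr u' =>
    cases j with
    | inl t' =>
      apply iff_of_false
      · exact edge_10_false (hm2 u'.val) (hm1 t'.val) b
      · exact edge_10_false (hm2' ((s + 1) - u').val) (hm1' (s - t').val) b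
    | inr u'' =>
      apply iff_of_false
      · exact edge_11_false (hm2 u'.val) (hm2 u''.val) b
      · exact edge_11_false (hm2' ((s + 1) - u').val) (hm2' ((s + 1) - u'').val) b

/-- a connected two-layer network on an even number n < 12 of
channels, with maximal first layer and every channel used in the second layer
(a single cycle), is equivalent to its reflection. -/
theorem small_cycle_self_reflective {n : ℕ} (hn : Even n) (hlt : n < 12)
    (L1 L2 : Layer n) (h1 : IsLayer L1) (hmax : L1.card = n / 2)
    (h2 : IsLayer L2) (hall : ∀ i : Fin n, usedIn L2 i)
    (hconn : GraphConnected ([L1, L2] : Net n)) :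
    GraphIso ([L1, L2] : Net n) (reflect ([L1, L2] : Net n)) := by
  classical
  rcases Nat.eq_zero_or_pos n with hn0 | hnpos
  · subst hn0
    haveI hC : IsEmpty (Vertex ([L1, L2] : Net 0)) := ⟨fun v => v.val.2.1.elim0⟩
    haveI hD : IsEmpty (Vertex (reflect ([L1, L2] : Net 0))) := ⟨fun v => v.val.2.1.elim0⟩
    exact ⟨Equiv.equivOfIsEmpty _ _, fun b u v => (hC.false u).elim⟩
  set k := n / 2 with hkdef
  have hn2k : n = 2 * k := by rw [Nat.even_iff] at hn; omega
  have hk : 0 < k := by omega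
  have hk5 : k ≤ 5 := by omega
  have hall1 : ∀ i, usedIn L1 i := all_used_of_card h1 hmax hn
  set q1 := partner L1 with hq1def
  set q2 := partner L2 with hq2def
  have hex1 : ∀ i : Fin n, ∃ j, Joined L1 i j := fun i => usedIn_exists (hall1 i)
  have hex2 : ∀ i : Fin n, ∃ j, Joined L2 i j := fun i => usedIn_exists (hall i)
  have hq1i : Function.Involutive q1 := fun i => partner_invol h1 (hex1 i)
  have hq2i : Function.Involutive q2 := fun i => partner_invol h2 (hex2 i)
  have hf1 : ∀ i, q1 i ≠ i := fun i => partner_ne h1 (hex1 i)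
  have hf2 : ∀ i, q2 i ≠ i := fun i => partner_ne h2 (hex2 i)
  have hj1 : ∀ i, Joined L1 i (q1 i) := fun i => partner_joined (hex1 i)
  have hj2 : ∀ i, Joined L2 i (q2 i) := fun i => partner_joined (hex2 i)
  set i0 : Fin n := ⟨0, by omega⟩ with hi0def
  set x : ℕ → Fin n := cyc q1 q2 i0 with hxdef
  set m := Function.minimalPeriod (q1 ∘ q2) i0 with hmdef
  have hm0 : 0 < m := hmdef ▸ cyc_period_pos hq1i hq2i
  have hx1 : ∀ t, Joined L1 (x (2 * t + 1)) (x (2 * t + 2)) := by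
    intro t
    rw [hxdef, cyc_odd_succ]
    exact hj1 _
  have hx2 : ∀ t, Joined L2 (x (2 * t)) (x (2 * t + 1)) := by
    intro t
    rw [hxdef, cyc_even_succ]
    exact hj2 _
  -- the range of the walk is closed under both partner maps
  have hrange : ∀ i : Fin n, (∃ t, x t = i) → (∃ t, x t = q1 i) ∧ (∃ t, x t = q2 i) := by
    rintro i ⟨t, rfl⟩
    constructor
    · by_cases hp : t % 2 = 0
      · refine ⟨t + 2 * m - 1, ?_⟩
        have hstep : x (t + 2 * m) = q1 (x (t + 2 * m - 1)) := by
          rw [hxdef]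
          conv_lhs => rw [show t + 2 * m = 2 * (t / 2 + m - 1) + 2 by omega]
          rw [cyc_odd_succ, show 2 * (t / 2 + m - 1) + 1 = t + 2 * m - 1 by omega]
        have hper : x (t + 2 * m) = x t := by
          rw [hxdef]; exact cyc_add_period hmdef t
        rw [← hper, hstep, hq1i]
      · refine ⟨t + 1, ?_⟩
        rw [hxdef, show t + 1 = 2 * (t / 2) + 2 by omega, cyc_odd_succ,
          show 2 * (t / 2) + 1 = t by omega]
    · by_cases hp : t % 2 = 0
      · refine ⟨t + 1, ?_⟩
        rw [hxdef, show t + 1 = 2 * (t / 2) + 1 by omega, cyc_even_succ,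
          show 2 * (t / 2) = t by omega]
      · refine ⟨t - 1, ?_⟩
        have hstep : x t = q2 (x (t - 1)) := by
          rw [hxdef]
          conv_lhs => rw [show t = 2 * (t / 2) + 1 by omega]
          rw [cyc_even_succ, show 2 * (t / 2) = t - 1 by omega]
        rw [hstep, hq2i]
  -- seed vertex
  obtain ⟨c0, hc0, hc0i⟩ := hall i0
  have hv0mem : ((1 : ℕ), c0).2 ∈ ([L1, L2] : Net n).getD ((1 : ℕ), c0).1 ∅ := hc0
  have hx0 : x 0 = i0 := by rw [hxdef]; rfl
  have hx1eq : x 1 = q2 i0 := by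
    rw [hxdef, show (1 : ℕ) = 2 * 0 + 1 by omega, cyc_even_succ]
    rfl
  have hP0 : (∃ t, x t = c0.1) ∧ (∃ t, x t = c0.2) := by
    have hjc : Joined L2 c0.1 c0.2 := Or.inl hc0
    rcases hc0i with he | he
    · have h2e : c0.2 = q2 c0.1 := (partner_eq h2 hjc).symm
      exact ⟨⟨0, by rw [hx0, he]⟩, ⟨1, by rw [hx1eq, h2e, he]⟩⟩
    · have h2e : c0.1 = q2 c0.2 := (partner_eq h2 (joined_symm hjc)).symm
      exact ⟨⟨1, by rw [hx1eq, h2e, he]⟩, ⟨0, by rw [hx0, he]⟩⟩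
  -- every vertex has its channels on the walk
  have key : ∀ v : Vertex ([L1, L2] : Net n),
      (∃ t, x t = v.val.2.1) ∧ (∃ t, x t = v.val.2.2) := by
    intro v
    have hcon := hconn ⟨((1 : ℕ), c0), hv0mem⟩ v
    induction hcon with
    | refl => exact hP0
    | tail hab hbc ih =>
      rename_i vb vc
      obtain ⟨ℓ, hor⟩ := hbc
      have hsh : ∃ ch : Fin n, (ch = vb.val.2.1 ∨ ch = vb.val.2.2) ∧
          (ch = vc.val.2.1 ∨ ch = vc.val.2.2) := by
        rcases hor with h | h
        · exact edge_shared h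
        · obtain ⟨ch, ha', hb'⟩ := edge_shared h
          exact ⟨ch, hb', ha'⟩
      obtain ⟨ch, hchb, hchc⟩ := hsh
      have hchr : ∃ t, x t = ch := by
        rcases hchb with rfl | rfl
        · exact ih.1
        · exact ih.2
      have hc2 : vc.val.1 < 2 := vertex_lt_two vc
      rcases (by omega : vc.val.1 = 0 ∨ vc.val.1 = 1) with h0 | h0
      · have hcL : vc.val.2 ∈ L1 := by
          have hp := vc.property
          rw [h0] at hp
          exact hp
        have hjc : Joined L1 vc.val.2.1 vc.val.2.2 := Or.inl hcL
        rcases hchc with he | he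
        · have hother : vc.val.2.2 = q1 ch := by rw [he]; exact (partner_eq h1 hjc).symm
          exact ⟨he ▸ hchr, hother ▸ (hrange ch hchr).1⟩
        · have hother : vc.val.2.1 = q1 ch := by
            rw [he]; exact (partner_eq h1 (joined_symm hjc)).symm
          exact ⟨hother ▸ (hrange ch hchr).1, he ▸ hchr⟩
      · have hcL : vc.val.2 ∈ L2 := by
          have hp := vc.property
          rw [h0] at hp
          exact hp
        have hjc : Joined L2 vc.val.2.1 vc.val.2.2 := Or.inl hcL
        rcases hchc with he | he
        · have hother : vc.val.2.2 = q2 ch := by rw [he]; exact (partner_eq h2 hjc).symm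
          exact ⟨he ▸ hchr, hother ▸ (hrange ch hchr).2⟩
        · have hother : vc.val.2.1 = q2 ch := by
            rw [he]; exact (partner_eq h2 (joined_symm hjc)).symm
          exact ⟨hother ▸ (hrange ch hchr).2, he ▸ hchr⟩
  -- surjectivity of the walk
  have hxs : ∀ i : Fin n, ∃ t, x t = i := by
    intro i
    obtain ⟨c, hc, hci⟩ := hall i
    have hmem : ((1 : ℕ), c).2 ∈ ([L1, L2] : Net n).getD ((1 : ℕ), c).1 ∅ := hc
    have hkk := key ⟨((1 : ℕ), c), hmem⟩
    rcases hci with he | he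
    · rw [← he]; exact hkk.1
    · rw [← he]; exact hkk.2
  -- the walk has exact period n
  have hcard : 2 * m = n := by
    have hbij : Function.Bijective (fun t : Fin (2 * m) => x t.val) := by
      constructor
      · intro a b hab
        apply Fin.ext
        refine cyc_inj_lt hq1i hq2i hmdef hf1 hf2 a.isLt b.isLt ?_
        rw [← hxdef]
        exact hab
      · intro i
        obtain ⟨t, ht⟩ := hxs i
        refine ⟨⟨t % (2 * m), Nat.mod_lt _ (by omega)⟩, ?_⟩
        show x (t % (2 * m)) = i
        rw [← ht, hxdef]
        exact (cyc_mod hq1i hq2i hmdef t).symm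
    have := Fintype.card_of_bijective hbij
    simpa using this
  have hxiff : ∀ a b : ℕ, x a = x b ↔ a ≡ b [MOD n] := by
    intro a b
    have ha : x a = x (a % n) := by
      rw [hxdef, show a % n = a % (2 * m) by rw [hcard]]
      exact cyc_mod hq1i hq2i hmdef a
    have hb : x b = x (b % n) := by
      rw [hxdef, show b % n = b % (2 * m) by rw [hcard]]
      exact cyc_mod hq1i hq2i hmdef b
    constructor
    · intro h
      rw [ha, hb] at h
      have : a % n = b % n := by
        refine cyc_inj_lt hq1i hq2i hmdef hf1 hf2 ?_ ?_ ?_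
        · rw [hcard]; exact Nat.mod_lt _ (by omega)
        · rw [hcard]; exact Nat.mod_lt _ (by omega)
        · rw [← hxdef]; exact h
      exact this
    · intro h
      rw [ha, hb]
      have : a % n = b % n := h
      rw [this]
  exact iso_main hn2k hk hk5 L1 L2 h1 h2 x hxiff hxs hx1 hx2


end SN
end

section
/- For every n ≥ 5, the number of equivalence classes under ≈ of redundant two-layer comparator networks on n channels with first layer F_n equals |R(G_{n−2})|, the number of equivalence classes under ≈ of all two-layer comparator networks on n−2 channels with first layer F_{n−2}. -/
namespace SN

open scoped Classical

/-!
A second layer `L` after `F_n` is redundant exactly when it repeats a comparator of `F_n`.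
A repeated comparator only sees inputs it has already sorted, so it can be deleted. If `L`
shares no comparator with `F_n`, deleting any comparator strictly enlarges the finite set of
outputs, which therefore cannot be a permutation of the old one. For a comparator `c` of `L`,
two `F_n`-sorted inputs differing by a swap of the channels of `c` collide only because of `c`.
For a comparator `c = (p, p + 1)` of `F_n`, a new output is `true` on the channels reachable
from `p` by entering comparators of `L` and of `F_n` other than `c` at their min-channel (a
set missing `p + 1`), with a small variant when `p` is the max-channel of a comparator of `L`.

In the graph representation a repeated comparator is an isolated pair of vertices joined by
edges of both labels; deleting it with its two channels leaves the graph of a network on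
`n - 2` channels with first layer `F_{n-2}`, and conversely every such network, shifted by two
channels and given the repeated comparator `(0, 1)`, becomes redundant. Isolated double edges
cancel from graph isomorphisms, so the two operations are inverse bijections of the classes.
-/

section Evaluation

variable {n : ℕ}

theorem IsLayer.isGenLayer {L : Layer n} (hL : IsLayer L) : IsGenLayer L :=
  ⟨fun c hc => (hL.1 c hc).ne, hL.2⟩

theorem NoOverlap.eq_of_shared {L : Layer n} (hL : NoOverlap L) {c c' : Comp n}
    (hc : c ∈ L) (hc' : c' ∈ L)
    (h : c.1 = c'.1 ∨ c.1 = c'.2 ∨ c.2 = c'.1 ∨ c.2 = c'.2) : c = c' := by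
  by_contra hne
  have := hL c hc c' hc' hne
  tauto

theorem IsGenLayer.erase {L : Layer n} (hL : IsGenLayer L) (c : Comp n) :
    IsGenLayer (L.erase c) :=
  ⟨fun e he => hL.1 e (Finset.mem_of_mem_erase he), fun e he e' he' =>
    hL.2 e (Finset.mem_of_mem_erase he) e' (Finset.mem_of_mem_erase he')⟩

theorem isGenLayer_singleton {c : Comp n} (hc : c.1 ≠ c.2) : IsGenLayer {c} :=
  ⟨by simpa using hc, fun e he e' he' hne => by simp_all⟩

theorem not_usedIn_erase {L : Layer n} (hL : NoOverlap L) {c : Comp n} (hc : c ∈ L)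
    {k : Fin n} (hk : k = c.1 ∨ k = c.2) : ¬ usedIn (L.erase c) k := by
  rintro ⟨e, he, hek⟩
  have := hL.eq_of_shared (Finset.mem_of_mem_erase he) hc (by rcases hk with rfl | rfl <;> tauto)
  exact Finset.ne_of_mem_erase he this

theorem applyLayer_fst {L : Layer n} (hL : IsGenLayer L) {c : Comp n} (hc : c ∈ L)
    (x : Fin n → Bool) : applyLayer L x c.1 = (x c.1 && x c.2) := by
  have h : ∃ e ∈ L, e.1 = c.1 := ⟨c, hc, rfl⟩
  rw [applyLayer, dif_pos h, hL.2.eq_of_shared h.choose_spec.1 hc (Or.inl h.choose_spec.2)]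

theorem applyLayer_snd {L : Layer n} (hL : IsGenLayer L) {c : Comp n} (hc : c ∈ L)
    (x : Fin n → Bool) : applyLayer L x c.2 = (x c.1 || x c.2) := by
  have h₁ : ¬ ∃ e ∈ L, e.1 = c.2 := by
    rintro ⟨e, he, hec⟩
    obtain rfl := hL.2.eq_of_shared he hc (by tauto)
    exact hL.1 e he hec
  have h₂ : ∃ e ∈ L, e.2 = c.2 := ⟨c, hc, rfl⟩
  rw [applyLayer, dif_neg h₁, dif_pos h₂,
    hL.2.eq_of_shared h₂.choose_spec.1 hc (by have := h₂.choose_spec.2; tauto)]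

theorem applyLayer_of_not_usedIn {L : Layer n} {k : Fin n} (hk : ¬ usedIn L k)
    (x : Fin n → Bool) : applyLayer L x k = x k := by
  have h₁ : ¬ ∃ e ∈ L, e.1 = k := fun ⟨e, he, h⟩ => hk ⟨e, he, Or.inl h⟩
  have h₂ : ¬ ∃ e ∈ L, e.2 = k := fun ⟨e, he, h⟩ => hk ⟨e, he, Or.inr h⟩
  rw [applyLayer, dif_neg h₁, dif_neg h₂]

def LayerSorted (L : Layer n) (x : Fin n → Bool) : Prop := ∀ c ∈ L, x c.1 ≤ x c.2

theorem applyLayer_eq_self {L : Layer n} (hL : IsGenLayer L) {x : Fin n → Bool}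
    (hx : LayerSorted L x) : applyLayer L x = x := by
  funext k
  by_cases hk : usedIn L k
  · obtain ⟨c, hc, rfl | rfl⟩ := hk
    · rw [applyLayer_fst hL hc]
      have := hx c hc
      revert this; cases x c.1 <;> cases x c.2 <;> decide
    · rw [applyLayer_snd hL hc]
      have := hx c hc
      revert this; cases x c.1 <;> cases x c.2 <;> decide
  · exact applyLayer_of_not_usedIn hk x

theorem range_applyLayer {L : Layer n} (hL : IsGenLayer L) :
    Set.range (applyLayer L) = {x | LayerSorted L x} := by
  ext x
  refine ⟨?_, fun hx => ⟨x, applyLayer_eq_self hL hx⟩⟩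
  rintro ⟨y, rfl⟩ c hc
  rw [applyLayer_fst hL hc, applyLayer_snd hL hc]
  cases y c.1 <;> cases y c.2 <;> decide

theorem outputs_pair {A B : Layer n} (hA : IsGenLayer A) :
    outputs [A, B] = applyLayer B '' {x | LayerSorted A x} := by
  rw [← range_applyLayer hA, ← Set.range_comp]
  rfl

theorem applyLayer_eq_singleton_erase {L : Layer n} (hL : IsGenLayer L) {c : Comp n}
    (hc : c ∈ L) (x : Fin n → Bool) :
    applyLayer L x = applyLayer {c} (applyLayer (L.erase c) x) := by
  have hc' : IsGenLayer {c} := isGenLayer_singleton (hL.1 c hc)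
  have hunused : ∀ k, k = c.1 ∨ k = c.2 → applyLayer (L.erase c) x k = x k :=
    fun k hk => applyLayer_of_not_usedIn (not_usedIn_erase hL.2 hc hk) x
  have hcc : c ∈ ({c} : Layer n) := Finset.mem_singleton_self c
  funext k
  by_cases hkc : k = c.1 ∨ k = c.2
  · rcases hkc with rfl | rfl
    · rw [applyLayer_fst hL hc, applyLayer_fst hc' hcc, hunused _ (.inl rfl), hunused _ (.inr rfl)]
    · rw [applyLayer_snd hL hc, applyLayer_snd hc' hcc, hunused _ (.inl rfl), hunused _ (.inr rfl)]
  have hk : ¬ usedIn {c} k := by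
    rintro ⟨e, he, hek⟩
    rw [Finset.mem_singleton] at he
    subst he
    tauto
  rw [applyLayer_of_not_usedIn hk]
  by_cases hu : usedIn L k
  · obtain ⟨e, he, rfl | rfl⟩ := hu
    · have he' : e ∈ L.erase c := Finset.mem_erase.2 ⟨by rintro rfl; tauto, he⟩
      rw [applyLayer_fst hL he, applyLayer_fst (hL.erase c) he']
    · have he' : e ∈ L.erase c := Finset.mem_erase.2 ⟨by rintro rfl; tauto, he⟩
      rw [applyLayer_snd hL he, applyLayer_snd (hL.erase c) he']
  · have hu' : ¬ usedIn (L.erase c) k :=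
      fun ⟨e, he, hek⟩ => hu ⟨e, Finset.mem_of_mem_erase he, hek⟩
    rw [applyLayer_of_not_usedIn hu, applyLayer_of_not_usedIn hu']

theorem apply_eq_of_applyLayer_eq {L : Layer n} (hL : IsGenLayer L) {z y : Fin n → Bool}
    (h : applyLayer L z = y) {k : Fin n}
    (hk : ∀ e ∈ L, (e.1 = k ∨ e.2 = k) → y e.1 = y e.2) : z k = y k := by
  by_cases hu : usedIn L k
  · obtain ⟨e, he, hek⟩ := hu
    have h₁ : (z e.1 && z e.2) = y e.1 := by rw [← h, applyLayer_fst hL he]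
    have h₂ : (z e.1 || z e.2) = y e.2 := by rw [← h, applyLayer_snd hL he]
    have h₃ := hk e he hek
    rcases hek with rfl | rfl <;> revert h₁ h₂ h₃ <;>
      cases z e.1 <;> cases z e.2 <;> cases y e.1 <;> cases y e.2 <;> decide
  · rw [← h, applyLayer_of_not_usedIn hu]

end Evaluation

section Outputs

variable {n : ℕ}

theorem applyLayer_comp_swap {L : Layer n} (hL : IsGenLayer L) {c : Comp n} (hc : c ∈ L)
    (x : Fin n → Bool) : applyLayer L (x ∘ Equiv.swap c.1 c.2) = applyLayer L x := by
  funext k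
  by_cases hu : usedIn L k
  · obtain ⟨e, he, rfl | rfl⟩ := hu <;> by_cases hec : e = c
    · subst hec
      simp [applyLayer_fst hL he, Bool.and_comm]
    · have := hL.2 e he c hc hec
      simp [applyLayer_fst hL he, Equiv.swap_apply_of_ne_of_ne, this.1, this.2.1, this.2.2.1,
        this.2.2.2]
    · subst hec
      simp [applyLayer_snd hL he, Bool.or_comm]
    · have := hL.2 e he c hc hec
      simp [applyLayer_snd hL he, Equiv.swap_apply_of_ne_of_ne, this.1, this.2.1, this.2.2.1,
        this.2.2.2]
  · have h₁ : k ≠ c.1 := fun h => hu ⟨c, hc, .inl h.symm⟩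
    have h₂ : k ≠ c.2 := fun h => hu ⟨c, hc, .inr h.symm⟩
    simp [applyLayer_of_not_usedIn hu, Equiv.swap_apply_of_ne_of_ne h₁ h₂]

noncomputable def charVec (X : Set (Fin n)) : Fin n → Bool := fun k => decide (k ∈ X)

theorem layerSorted_charVec {L : Layer n} {X : Set (Fin n)}
    (h : ∀ e ∈ L, e.1 ∈ X → e.2 ∈ X) : LayerSorted L (charVec X) := by
  intro e he
  by_cases h₁ : e.1 ∈ X
  · simp [charVec, h₁, h e he h₁]
  · simp [charVec, h₁]

theorem permSet_one (S : Set (Fin n → Bool)) : permSet 1 S = S := by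
  rw [permSet, show permVec (1 : Equiv.Perm (Fin n)) = id from rfl, Set.image_id]

theorem ncard_permSet (π : Equiv.Perm (Fin n)) (S : Set (Fin n → Bool)) :
    (permSet π S).ncard = S.ncard :=
  Set.ncard_image_of_injective S fun x y h =>
    funext fun i => by simpa [permVec] using congrFun h (π i)

/-- A comparator of `K` repeated in the second layer only sees inputs it has already sorted. -/
theorem outputs_erase_snd_of_mem {K L : Layer n} (hK : IsGenLayer K) (hL : IsGenLayer L)
    {d : Comp n} (hdK : d ∈ K) (hdL : d ∈ L) :
    outputs [K, L.erase d] = outputs [K, L] := by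
  rw [outputs_pair hK, outputs_pair hK]
  refine Set.image_congr fun x hx => ?_
  have hd : LayerSorted {d} (applyLayer (L.erase d) x) := by
    intro e he
    rw [Finset.mem_singleton] at he
    subst he
    rw [applyLayer_of_not_usedIn (not_usedIn_erase hL.2 hdL (.inl rfl)),
      applyLayer_of_not_usedIn (not_usedIn_erase hL.2 hdL (.inr rfl))]
    exact hx e hdK
  rw [applyLayer_eq_singleton_erase hL hdL,
    applyLayer_eq_self (isGenLayer_singleton (hL.1 d hdL)) hd]

theorem redundant_of_mem {K L : Layer n} (hK : IsGenLayer K) (hL : IsGenLayer L)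
    {d : Comp n} (hdK : d ∈ K) (hdL : d ∈ L) : Redundant K L :=
  ⟨1, .inr ⟨d, hdL, by rw [permSet_one, outputs_erase_snd_of_mem hK hL hdK hdL]⟩⟩

theorem layerSorted_charVec_insert_maxChan {K : Layer n} (hK : IsGenLayer K) {a : Fin n}
    {S : Set (Fin n)} (h : ∀ e ∈ K, e.1 = a → e.2 ∉ S) :
    LayerSorted K (charVec (insert a {k | MaxChan K k ∧ k ∉ S})) := by
  refine layerSorted_charVec fun e he h₁ => .inr ⟨⟨e, he, rfl⟩, ?_⟩
  rcases h₁ with h₁ | ⟨⟨e', he', h₂⟩, -⟩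
  · exact h e he h₁
  · obtain rfl := hK.2.eq_of_shared he he' (.inr (.inl h₂.symm))
    exact absurd h₂ (hK.1 e he).symm

theorem exists_layerSorted_comp_swap {K : Layer n} (hK : IsLayer K) {c : Comp n}
    (hlt : c.1 < c.2) (hcK : c ∉ K) :
    ∃ z, LayerSorted K z ∧ LayerSorted K (z ∘ Equiv.swap c.1 c.2) ∧
      z c.1 = true ∧ z c.2 = false := by
  set M₀ : Set (Fin n) := {k | MaxChan K k ∧ k ∉ ({c.1, c.2} : Set (Fin n))}
  refine ⟨charVec (insert c.1 M₀), ?_, ?_, by simp [charVec], by simp [charVec, M₀, hlt.ne']⟩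
  · refine layerSorted_charVec_insert_maxChan hK.isGenLayer fun e he he1 => ?_
    rintro (h | h)
    · exact absurd (he1.trans h.symm) (hK.1 e he).ne
    · exact hcK (by rwa [← Prod.mk.eta (p := e), he1, h] at he)
  · have : charVec (insert c.1 M₀) ∘ Equiv.swap c.1 c.2 = charVec (insert c.2 M₀) := by
      funext k
      by_cases h₁ : k = c.1
      · subst h₁; simp [charVec, M₀, hlt.ne, hlt.ne']
      by_cases h₂ : k = c.2
      · subst h₂; simp [charVec, M₀]
      · simp [charVec, M₀, Equiv.swap_apply_of_ne_of_ne h₁ h₂, h₁, h₂]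
    rw [this]
    refine layerSorted_charVec_insert_maxChan hK.isGenLayer fun e he he1 => ?_
    have := hK.1 e he
    rintro (h | h) <;> rw [he1, h] at this
    · exact hlt.not_gt this
    · exact lt_irrefl _ this

/-- Two `K`-sorted inputs differing by swapping the channels of `c` collide under `L` but not
under `L.erase c`. -/
theorem ncard_outputs_lt_erase_snd {K L : Layer n} (hK : IsLayer K) (hL : IsLayer L)
    (hKL : Disjoint K L) {c : Comp n} (hc : c ∈ L) :
    (outputs [K, L]).ncard < (outputs [K, L.erase c]).ncard := by
  obtain ⟨z, hz, hzσ, hz₁, hz₂⟩ :=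
    exists_layerSorted_comp_swap hK (hL.1 c hc) (Finset.disjoint_right.1 hKL hc)
  have hcollide : ¬ Set.InjOn (applyLayer {c}) (outputs [K, L.erase c]) := by
    rw [outputs_pair hK.isGenLayer]
    intro hinj
    have := hinj ⟨z, hz, rfl⟩ ⟨_, hzσ, rfl⟩ (by
      rw [← applyLayer_eq_singleton_erase hL.isGenLayer hc,
        ← applyLayer_eq_singleton_erase hL.isGenLayer hc, applyLayer_comp_swap hL.isGenLayer hc])
    have := congrFun this c.1
    rw [applyLayer_of_not_usedIn (not_usedIn_erase hL.2 hc (.inl rfl)),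
      applyLayer_of_not_usedIn (not_usedIn_erase hL.2 hc (.inl rfl))] at this
    simp [hz₁, hz₂] at this
  have himage : outputs [K, L] = applyLayer {c} '' outputs [K, L.erase c] := by
    rw [outputs_pair hK.isGenLayer, outputs_pair hK.isGenLayer, Set.image_image]
    exact Set.image_congr fun x _ => applyLayer_eq_singleton_erase hL.isGenLayer hc x
  rw [himage]
  exact lt_of_le_of_ne (Set.ncard_image_le (Set.toFinite _))
    fun h => hcollide (Set.injOn_of_ncard_image_eq h (Set.toFinite _))

end Outputs

section EraseFirst

variable {n : ℕ}

theorem not_subset_outputs_erase_fst_of_layerSorted {K L : Layer n} (hK : IsGenLayer K)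
    (hL : IsGenLayer L) (c : Comp n) {y : Fin n → Bool} (hyK : LayerSorted (K.erase c) y)
    (hyL : LayerSorted L y)
    (hy : ∀ z, LayerSorted K z → applyLayer L z ≠ y) :
    ¬ outputs [K.erase c, L] ⊆ outputs [K, L] := by
  intro hsub
  have hmem : y ∈ outputs [K.erase c, L] := by
    rw [outputs_pair (hK.erase c)]
    exact ⟨y, hyK, applyLayer_eq_self hL hyL⟩
  rw [outputs_pair hK] at hsub
  obtain ⟨z, hz, hzy⟩ := hsub hmem
  exact hy z hz hzy

/-- The preimages of the vector `true` on `c.1` alone are unsorted on `c` or on `(a, u)`. -/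
theorem not_subset_outputs_erase_fst_of_minChan {K L : Layer n} (hK : IsLayer K)
    (hL : IsLayer L) (hKL : Disjoint K L) {c : Comp n} (hc : c ∈ K) {a u : Fin n}
    (hap : (a, c.1) ∈ L) (hau : (a, u) ∈ K) :
    ¬ outputs [K.erase c, L] ⊆ outputs [K, L] := by
  have hlt : c.1 < c.2 := hK.1 c hc
  have hap_lt : a < c.1 := hL.1 _ hap
  have hau_lt : a < u := hK.1 _ hau
  have hu : u ≠ c.1 := by
    rintro rfl
    exact Finset.disjoint_left.1 hKL hau hap
  have hoff : ∀ e ∈ L, e ≠ (a, c.1) → e.1 ≠ c.1 ∧ e.2 ≠ c.1 ∧ e.1 ≠ a ∧ e.2 ≠ a :=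
    fun e he hne => by have := hL.2 e he _ hap hne; tauto
  refine not_subset_outputs_erase_fst_of_layerSorted hK.isGenLayer hL.isGenLayer c
    (y := charVec {c.1}) (layerSorted_charVec fun e he h => ?_)
    (layerSorted_charVec fun e he h => ?_) ?_
  · exact absurd (hK.2.eq_of_shared (Finset.mem_of_mem_erase he) hc (.inl h))
      (Finset.ne_of_mem_erase he)
  · obtain rfl := hL.2.eq_of_shared he hap (.inr (.inl h))
    exact absurd h hap_lt.ne
  intro z hz hzy
  have hzero : ∀ k, k ≠ a → k ≠ c.1 → z k = false := by
    intro k hka hkp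
    rw [apply_eq_of_applyLayer_eq hL.isGenLayer hzy fun e he hek => ?_]
    · simp [charVec, hkp]
    have hne : e ≠ (a, c.1) := by rintro rfl; rcases hek with h | h <;> simp_all
    simp [charVec, (hoff e he hne).1, (hoff e he hne).2.1]
  have hor : (z a || z c.1) = true := by
    rw [← applyLayer_snd hL.isGenLayer hap, hzy]; simp [charVec]
  have hc_sorted := hz c hc
  have hau_sorted := hz _ hau
  rw [hzero c.2 (hap_lt.trans hlt).ne' hlt.ne'] at hc_sorted
  rw [hzero u hau_lt.ne' hu] at hau_sorted
  revert hor hc_sorted hau_sorted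
  cases z a <;> cases z c.1 <;> decide

/-- The vector `true` on `a` and `c.1` is constant on every comparator of `L`, so it is its own
only preimage. -/
theorem not_subset_outputs_erase_fst_of_not_minChan {K L : Layer n} (hK : IsLayer K)
    (hL : IsLayer L) {c : Comp n} (hc : c ∈ K) {a : Fin n}
    (hap : (a, c.1) ∈ L) (ha : ¬ MinChan K a) :
    ¬ outputs [K.erase c, L] ⊆ outputs [K, L] := by
  have hlt : c.1 < c.2 := hK.1 c hc
  have hap_lt : a < c.1 := hL.1 _ hap
  have hconst : ∀ e ∈ L, e.1 ∈ ({a, c.1} : Set (Fin n)) ↔ e.2 ∈ ({a, c.1} : Set (Fin n)) := by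
    intro e he
    by_cases hne : e = (a, c.1)
    · subst hne; simp
    · have := hL.2 e he _ hap hne
      simp only [Set.mem_insert_iff, Set.mem_singleton_iff]
      tauto
  refine not_subset_outputs_erase_fst_of_layerSorted hK.isGenLayer hL.isGenLayer c
    (y := charVec {a, c.1}) (layerSorted_charVec fun e he h => ?_)
    (layerSorted_charVec fun e he h => (hconst e he).1 h) ?_
  · rcases h with h | h
    · exact absurd ⟨e, Finset.mem_of_mem_erase he, h⟩ ha
    · exact absurd (hK.2.eq_of_shared (Finset.mem_of_mem_erase he) hc (.inl h))
        (Finset.ne_of_mem_erase he)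
  intro z hz hzy
  have hzc := hz c hc
  rw [apply_eq_of_applyLayer_eq hL.isGenLayer hzy fun e he _ => by simp [charVec, hconst e he],
    apply_eq_of_applyLayer_eq hL.isGenLayer hzy fun e he _ => by simp [charVec, hconst e he]]
    at hzc
  simp [charVec, (hap_lt.trans hlt).ne', hlt.ne'] at hzc
  exact absurd hzc (by decide)

theorem eq_false_of_applyLayer_eq_charVec {L : Layer n} (hL : IsGenLayer L) {W : Set (Fin n)}
    {z : Fin n → Bool} (hzy : applyLayer L z = charVec W) (htrue : ∀ b ∈ W, z b = true)
    {k : Fin n} (hk : k ∉ W) : z k = false := by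
  by_cases hu : usedIn L k
  · obtain ⟨e, he, hek⟩ := hu
    have h₁ : (z e.1 && z e.2) = charVec W e.1 := by rw [← hzy, applyLayer_fst hL he]
    have h₂ : (z e.1 || z e.2) = charVec W e.2 := by rw [← hzy, applyLayer_snd hL he]
    rcases hek with rfl | rfl
    · by_cases he2 : e.2 ∈ W
      · simpa [charVec, hk, htrue _ he2] using h₁
      · simp only [charVec, he2, decide_false, Bool.or_eq_false_iff] at h₂
        exact h₂.1
    · simp only [charVec, hk, decide_false, Bool.or_eq_false_iff] at h₂
      exact h₂.2
  · simpa [charVec, hk, applyLayer_of_not_usedIn hu] using congrFun hzy k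

def upClosure (K L : Layer n) (c : Comp n) : Set (Fin n) :=
  {b | Relation.ReflTransGen (fun a b => (a, b) ∈ L ∨ (a, b) ∈ K.erase c) c.1 b}

theorem mem_upClosure_of_mem {K L : Layer n} {c : Comp n} {a b : Fin n}
    (ha : a ∈ upClosure K L c) (hab : (a, b) ∈ L ∨ (a, b) ∈ K.erase c) :
    b ∈ upClosure K L c :=
  Relation.ReflTransGen.tail ha hab

theorem le_of_mem_upClosure {K L : Layer n} (hK : IsLayer K) (hL : IsLayer L) {c : Comp n}
    {b : Fin n} (hb : b ∈ upClosure K L c) : c.1 ≤ b := by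
  induction hb with
  | refl => exact le_rfl
  | tail _ hab ih =>
    rcases hab with h | h
    · exact ih.trans (hL.1 _ h).le
    · exact ih.trans (hK.1 _ (Finset.mem_of_mem_erase h)).le

theorem snd_notMem_upClosure {K L : Layer n} (hK : IsLayer K) (hL : IsLayer L)
    (hKL : Disjoint K L) {c : Comp n} (hc : c ∈ K) (hadj : c.2.val = c.1.val + 1) :
    c.2 ∉ upClosure K L c := by
  intro h
  rcases Relation.ReflTransGen.cases_tail h with h | ⟨a, ha, hab⟩
  · exact (hK.1 c hc).ne' h
  have hle := le_of_mem_upClosure hK hL ha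
  have hlt : a < c.2 := by
    rcases hab with h | h
    · exact hL.1 _ h
    · exact hK.1 _ (Finset.mem_of_mem_erase h)
  obtain rfl : a = c.1 := le_antisymm (Fin.le_def.2 (by rw [Fin.lt_def] at hlt; omega)) hle
  rcases hab with h | h
  · exact Finset.disjoint_left.1 hKL hc h
  · exact Finset.ne_of_mem_erase h rfl

/-- A channel of the up-closure losing `true` would be the max-channel of a comparator of `L`
entered from outside, hence (not being `c.1`) reached through a comparator of `K` whose
min-channel keeps `true` by induction. -/
theorem eq_true_of_mem_upClosure {K L : Layer n} (hK : IsLayer K) (hL : IsLayer L)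
    {c : Comp n} (hp : ¬ MaxChan L c.1) {z : Fin n → Bool} (hz : LayerSorted K z)
    (hzy : applyLayer L z = charVec (upClosure K L c)) :
    ∀ b ∈ upClosure K L c, z b = true := by
  intro b
  induction b using WellFoundedLT.induction with
  | _ b ih =>
    intro hb
    by_contra hzb
    obtain ⟨e, he, heb, hea⟩ : ∃ e ∈ L, e.2 = b ∧ e.1 ∉ upClosure K L c := by
      by_contra! hno
      refine hzb ?_
      rw [apply_eq_of_applyLayer_eq hL.isGenLayer hzy fun e he hek => ?_]
      · simp [charVec, hb]
      have : e.1 ∈ upClosure K L c ∧ e.2 ∈ upClosure K L c := by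
        rcases hek with rfl | rfl
        · exact ⟨hb, mem_upClosure_of_mem hb (.inl he)⟩
        · exact ⟨hno e he rfl, hb⟩
      simp [charVec, this.1, this.2]
    rcases Relation.ReflTransGen.cases_tail hb with rfl | ⟨a, ha, hab | hab⟩
    · exact hp ⟨e, he, heb⟩
    · obtain rfl := hL.2.eq_of_shared he hab (.inr (.inr (.inr heb)))
      exact hea ha
    · have hab_sorted := hz _ (Finset.mem_of_mem_erase hab)
      rw [ih a (hK.1 _ (Finset.mem_of_mem_erase hab)) ha] at hab_sorted
      exact hzb (Bool.le_iff_imp.1 hab_sorted rfl)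

theorem not_subset_outputs_erase_fst_of_not_maxChan {K L : Layer n} (hK : IsLayer K)
    (hL : IsLayer L) (hKL : Disjoint K L) {c : Comp n} (hc : c ∈ K)
    (hadj : c.2.val = c.1.val + 1) (hp : ¬ MaxChan L c.1) :
    ¬ outputs [K.erase c, L] ⊆ outputs [K, L] := by
  set W := upClosure K L c
  have hqW : c.2 ∉ W := snd_notMem_upClosure hK hL hKL hc hadj
  refine not_subset_outputs_erase_fst_of_layerSorted hK.isGenLayer hL.isGenLayer c
    (y := charVec W) (layerSorted_charVec fun e he h => mem_upClosure_of_mem h (.inr he))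
    (layerSorted_charVec fun e he h => mem_upClosure_of_mem h (.inl he)) ?_
  intro z hz hzy
  have htrue := eq_true_of_mem_upClosure hK hL hp hz hzy
  have hzq : z c.2 = false := eq_false_of_applyLayer_eq_charVec hL.isGenLayer hzy htrue hqW
  have hzc := hz c hc
  rw [htrue _ Relation.ReflTransGen.refl, hzq] at hzc
  exact absurd hzc (by decide)

theorem ncard_outputs_lt_erase_fst {K L : Layer n} (hK : IsLayer K) (hL : IsLayer L)
    (hKL : Disjoint K L) {c : Comp n} (hc : c ∈ K) (hadj : c.2.val = c.1.val + 1) :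
    (outputs [K, L]).ncard < (outputs [K.erase c, L]).ncard := by
  have hsub : outputs [K, L] ⊆ outputs [K.erase c, L] := by
    rw [outputs_pair hK.isGenLayer, outputs_pair (hK.isGenLayer.erase c)]
    exact Set.image_mono fun x hx e he => hx e (Finset.mem_of_mem_erase he)
  have hnot : ¬ outputs [K.erase c, L] ⊆ outputs [K, L] := by
    by_cases hp : MaxChan L c.1
    · obtain ⟨⟨a, p⟩, hap, rfl : p = c.1⟩ := hp
      by_cases ha : MinChan K a
      · obtain ⟨⟨a', u⟩, hau, rfl : a' = a⟩ := ha
        exact not_subset_outputs_erase_fst_of_minChan hK hL hKL hc hap hau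
      · exact not_subset_outputs_erase_fst_of_not_minChan hK hL hc hap ha
    · exact not_subset_outputs_erase_fst_of_not_maxChan hK hL hKL hc hadj hp
  exact Set.ncard_lt_ncard ⟨hsub, hnot⟩

end EraseFirst

section Redundancy

variable {n : ℕ}

theorem redundant_iff_exists_mem {K L : Layer n} (hK : IsLayer K)
    (hadj : ∀ c ∈ K, c.2.val = c.1.val + 1) (hL : IsLayer L) :
    Redundant K L ↔ ∃ d ∈ K, d ∈ L := by
  refine ⟨fun ⟨π, h⟩ => ?_, fun ⟨d, hdK, hdL⟩ =>
    redundant_of_mem hK.isGenLayer hL.isGenLayer hdK hdL⟩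
  by_contra! hKL
  have hdisj : Disjoint K L := Finset.disjoint_left.2 hKL
  rcases h with ⟨c, hc, heq⟩ | ⟨c, hc, heq⟩
  · have := ncard_outputs_lt_erase_fst hK hL hdisj hc (hadj c hc)
    rw [heq, ncard_permSet] at this
    exact lt_irrefl _ this
  · have := ncard_outputs_lt_erase_snd hK hL hdisj hc
    rw [heq, ncard_permSet] at this
    exact lt_irrefl _ this

theorem mem_FLayer {c : Comp n} : c ∈ FLayer n ↔ c.1.val % 2 = 0 ∧ c.2.val = c.1.val + 1 := by
  simp [FLayer]

theorem FLayer_isLayer : IsLayer (FLayer n) := by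
  refine ⟨fun c hc => Fin.lt_def.2 (by rw [(mem_FLayer.1 hc).2]; omega),
    fun c hc c' hc' hne => ?_⟩
  rw [mem_FLayer] at hc hc'
  have : c.1 ≠ c'.1 := fun h => hne (Prod.ext h (Fin.ext (by rw [hc.2, hc'.2, h])))
  simp only [ne_eq, Fin.ext_iff] at this ⊢
  omega

theorem redundant_FLayer_iff {L : Layer n} (hL : IsLayer L) :
    Redundant (FLayer n) L ↔ ∃ d ∈ FLayer n, d ∈ L :=
  redundant_iff_exists_mem FLayer_isLayer (fun _ hc => (mem_FLayer.1 hc).2) hL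

end Redundancy

section LabeledGraph

variable {V W X : Type*}

/-- Isomorphism of directed graphs with edges labelled by `Bool`, given as relations. -/
def LabeledIso (r : Bool → V → V → Prop) (s : Bool → W → W → Prop) : Prop :=
  ∃ g : V ≃ W, ∀ b x y, r b x y ↔ s b (g x) (g y)

namespace LabeledIso

theorem symm {r : Bool → V → V → Prop} {s : Bool → W → W → Prop} (h : LabeledIso r s) :
    LabeledIso s r := by
  obtain ⟨g, hg⟩ := h
  exact ⟨g.symm, fun b x y => by rw [hg, Equiv.apply_symm_apply, Equiv.apply_symm_apply]⟩

theorem trans {r : Bool → V → V → Prop} {s : Bool → W → W → Prop} {t : Bool → X → X → Prop}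
    (h₁ : LabeledIso r s) (h₂ : LabeledIso s t) : LabeledIso r t := by
  obtain ⟨g₁, hg₁⟩ := h₁
  obtain ⟨g₂, hg₂⟩ := h₂
  exact ⟨g₁.trans g₂, fun b x y => (hg₁ b x y).trans (hg₂ b _ _)⟩

end LabeledIso

def addDoubleEdge (r : Bool → V → V → Prop) : Bool → V ⊕ Bool → V ⊕ Bool → Prop
  | b, .inl x, .inl y => r b x y
  | _, .inr false, .inr true => True
  | _, _, _ => False

theorem LabeledIso.addDoubleEdge {r : Bool → V → V → Prop} {s : Bool → W → W → Prop}
    (h : LabeledIso r s) : LabeledIso (addDoubleEdge r) (addDoubleEdge s) := by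
  obtain ⟨g, hg⟩ := h
  refine ⟨g.sumCongr (Equiv.refl Bool), ?_⟩
  rintro b (x | _ | _) (y | _ | _) <;> simp [SN.addDoubleEdge, hg]

def DoubleEdgesIsolated (s : Bool → W → W → Prop) : Prop :=
  ∀ u v, s false u v → s true u v →
    ∀ b w, (s b u w → w = v) ∧ (s b w v → w = u) ∧ ¬ s b w u ∧ ¬ s b v w

theorem labeledIso_of_addDoubleEdge_of_fixed {r : Bool → V → V → Prop}
    {s : Bool → W → W → Prop} (G : V ⊕ Bool ≃ W ⊕ Bool)
    (hG : ∀ b x y, addDoubleEdge r b x y ↔ addDoubleEdge s b (G x) (G y))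
    (hfix : ∀ b, G (.inr b) = .inr b) : LabeledIso r s := by
  have hleft : ∀ x, x.isLeft ↔ (G x).isLeft := by
    rintro (x | b)
    · cases hx : G (.inl x) with
      | inl _ => simp
      | inr b => exact absurd (G.injective (hx.trans (hfix b).symm)) Sum.inl_ne_inr
    · simp [hfix]
  let g : V ≃ W := (Equiv.sumIsLeft.symm.trans (G.subtypeEquiv hleft)).trans Equiv.sumIsLeft
  have hg : ∀ x, G (.inl x) = .inl (g x) := fun x => (Sum.inl_getLeft _ _).symm
  exact ⟨g, fun b x y => by simpa [hg, addDoubleEdge] using hG b (.inl x) (.inl y)⟩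

theorem exists_swap_addDoubleEdge {s : Bool → W → W → Prop} (hs : DoubleEdgesIsolated s)
    {u v : W} (hf : s false u v) (ht : s true u v) :
    ∃ σ : W ⊕ Bool ≃ W ⊕ Bool, (∀ b x y, addDoubleEdge s b x y ↔
      addDoubleEdge s b (σ x) (σ y)) ∧ σ (.inl u) = .inr false ∧ σ (.inl v) = .inr true := by
  have huv : u ≠ v := by
    rintro rfl
    exact (hs u u hf ht false u).2.2.2 hf
  let σ : W ⊕ Bool ≃ W ⊕ Bool :=
    (Equiv.swap (.inl u) (.inr false)).trans (Equiv.swap (.inl v) (.inr true))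
  have hσσ : ∀ x, σ (σ x) = x := by
    intro x
    simp only [σ, Equiv.trans_apply, Equiv.swap_apply_def]
    split_ifs <;> simp_all
  have hmap : ∀ b x y, addDoubleEdge s b x y → addDoubleEdge s b (σ x) (σ y) := by
    rintro b (w | _ | _) (w' | _ | _) h <;> simp only [addDoubleEdge] at h
    · have hiso := hs u v hf ht b
      by_cases hwu : w = u
      · subst hwu
        obtain rfl := (hiso w').1 h
        simp [σ, addDoubleEdge, Equiv.swap_apply_of_ne_of_ne, Ne.symm huv]
      have hwv : w ≠ v := by rintro rfl; exact (hiso w').2.2.2 h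
      have hw'u : w' ≠ u := by rintro rfl; exact (hiso w).2.2.1 h
      have hw'v : w' ≠ v := by rintro rfl; exact hwu ((hiso w).2.1 h)
      simpa [σ, addDoubleEdge, Equiv.swap_apply_of_ne_of_ne, hwu, hwv, hw'u, hw'v] using h
    · simp [σ, addDoubleEdge, Equiv.swap_apply_of_ne_of_ne, huv]
      cases b <;> assumption
  refine ⟨σ, fun b x y => ⟨hmap b x y, fun h => ?_⟩, by simp [σ, Equiv.swap_apply_of_ne_of_ne],
    by simp [σ, Equiv.swap_apply_of_ne_of_ne, Ne.symm huv]⟩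
  simpa [hσσ] using hmap b _ _ h

theorem labeledIso_of_addDoubleEdge {r : Bool → V → V → Prop} {s : Bool → W → W → Prop}
    (hs : DoubleEdgesIsolated s) (h : LabeledIso (addDoubleEdge r) (addDoubleEdge s)) :
    LabeledIso r s := by
  obtain ⟨G, hG⟩ := h
  have hedge : ∀ b, addDoubleEdge s b (G (.inr false)) (G (.inr true)) := fun b =>
    (hG b _ _).1 trivial
  rcases hf : G (.inr false) with u | _ | _ <;> rcases ht : G (.inr true) with v | _ | _ <;>
    simp only [hf, ht, addDoubleEdge, forall_const] at hedge
  · obtain ⟨σ, hσ, hσu, hσv⟩ := exists_swap_addDoubleEdge hs (hedge false) (hedge true)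
    refine labeledIso_of_addDoubleEdge_of_fixed (G.trans σ)
      (fun b x y => (hG b x y).trans (hσ b _ _)) ?_
    rintro (_ | _) <;> simp [hf, ht, hσu, hσv]
  · refine labeledIso_of_addDoubleEdge_of_fixed G hG ?_
    rintro (_ | _) <;> assumption

end LabeledGraph

section NetworkGraph

variable {n m : ℕ}

def Feeds (b : Bool) (c d : Comp n) : Prop := outChan c b = d.1 ∨ outChan c b = d.2

/-- The graph representation `G([A, B])`, with vertex type `A ⊕ B`. -/
def twoLayerGraph (A B : Layer n) : Bool → A ⊕ B → A ⊕ B → Prop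
  | b, .inl c, .inr d => Feeds b c.1 d.1
  | _, _, _ => False

def vertexEquiv (A B : Layer n) : Vertex ([A, B] : Net n) ≃ A ⊕ B where
  toFun
    | ⟨(0, c), h⟩ => .inl ⟨c, h⟩
    | ⟨(1, c), h⟩ => .inr ⟨c, h⟩
    | ⟨(_ + 2, _), h⟩ => absurd h (Finset.notMem_empty _)
  invFun
    | .inl c => ⟨(0, c.1), c.2⟩
    | .inr c => ⟨(1, c.1), c.2⟩
  left_inv := by
    rintro ⟨⟨_ | _ | k, c⟩, h⟩
    · rfl
    · rfl
    · exact absurd h (Finset.notMem_empty _)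
  right_inv := by rintro (c | c) <;> rfl

theorem labeledIso_edge_twoLayerGraph (A B : Layer n) :
    LabeledIso (fun b (u v : Vertex ([A, B] : Net n)) => Edge [A, B] b u.val v.val)
      (twoLayerGraph A B) := by
  refine ⟨vertexEquiv A B, ?_⟩
  rintro b ⟨⟨_ | _ | k, c⟩, hu⟩ ⟨⟨_ | _ | k', c'⟩, hv⟩ <;>
    first
    | exact absurd hu (Finset.notMem_empty _)
    | exact absurd hv (Finset.notMem_empty _)
    | simp [vertexEquiv, twoLayerGraph, Edge, Feeds]
  omega

theorem graphIso_iff_labeledIso_edge (C : Net n) (D : Net m) :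
    GraphIso C D ↔ LabeledIso (fun b (u v : Vertex C) => Edge C b u.val v.val)
      (fun b (u v : Vertex D) => Edge D b u.val v.val) :=
  Iff.rfl

theorem graphIso_iff_labeledIso (A B : Layer n) (A' B' : Layer m) :
    GraphIso ([A, B] : Net n) ([A', B'] : Net m) ↔
      LabeledIso (twoLayerGraph A B) (twoLayerGraph A' B') := by
  rw [graphIso_iff_labeledIso_edge]
  exact ⟨fun h => ((labeledIso_edge_twoLayerGraph A B).symm.trans h).trans
      (labeledIso_edge_twoLayerGraph A' B'),
    fun h => ((labeledIso_edge_twoLayerGraph A B).trans h).trans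
      (labeledIso_edge_twoLayerGraph A' B').symm⟩

theorem Feeds.shared {b : Bool} {c d : Comp n} (h : Feeds b c d) :
    c.1 = d.1 ∨ c.1 = d.2 ∨ c.2 = d.1 ∨ c.2 = d.2 := by
  cases b <;> simp only [Feeds, outChan] at h <;> tauto

/-- In the graph of two layers, a double edge `c → d` means `c = d`, and then no other
comparator feeds into `d` or is fed by `c`. -/
theorem twoLayerGraph_doubleEdgesIsolated {A B : Layer n} (hA : IsLayer A) (hB : IsLayer B) :
    DoubleEdgesIsolated (twoLayerGraph A B) := by
  rintro (c | c) (d | d) hf ht <;> simp only [twoLayerGraph] at hf ht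
  have hcd : c.1 = d.1 := by
    have := hA.1 c c.2
    have := hB.1 d d.2
    simp only [Feeds, outChan, Bool.false_eq_true, ↓reduceIte] at hf ht
    apply Prod.ext <;> simp only [Fin.ext_iff, Fin.lt_def] at * <;> omega
  rintro b (e | e) <;> refine ⟨fun h => ?_, fun h => ?_, by simp [twoLayerGraph],
    by simp [twoLayerGraph]⟩ <;> simp only [twoLayerGraph] at h ⊢
  · have := h.shared
    rw [← hcd] at this
    exact congrArg _ (Subtype.ext (hA.2.eq_of_shared e.2 c.2 this))
  · have := h.shared
    rw [hcd] at this
    exact congrArg _ (Subtype.ext (hB.2.eq_of_shared e.2 d.2 (by tauto)))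

end NetworkGraph

section SkipPair

variable {m : ℕ}

def skipTwo (t : ℕ) (k : Fin m) : Fin (m + 2) :=
  if k.val < t then ⟨k.val, by omega⟩ else ⟨k.val + 2, by omega⟩

theorem skipTwo_val (t : ℕ) (k : Fin m) :
    (skipTwo t k).val = if k.val < t then k.val else k.val + 2 := by
  unfold skipTwo
  split <;> rfl

theorem skipTwo_strictMono (t : ℕ) : StrictMono (skipTwo (m := m) t) := by
  intro a b h
  rw [Fin.lt_def] at h ⊢
  rw [skipTwo_val, skipTwo_val]
  split_ifs <;> omega

theorem skipTwo_ne (t : ℕ) (k : Fin m) : (skipTwo t k).val ≠ t ∧ (skipTwo t k).val ≠ t + 1 := by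
  rw [skipTwo_val]
  split_ifs <;> omega

theorem exists_skipTwo_eq {t : ℕ} (ht : t ≤ m) {k : Fin (m + 2)} (h₁ : k.val ≠ t)
    (h₂ : k.val ≠ t + 1) : ∃ j, skipTwo t j = k := by
  by_cases hk : k.val < t
  · exact ⟨⟨k.val, by omega⟩, Fin.ext (by rw [skipTwo_val]; simp [hk])⟩
  · exact ⟨⟨k.val - 2, by omega⟩, Fin.ext (by rw [skipTwo_val]; dsimp only; split_ifs <;> omega)⟩

def skipTwoComp (t : ℕ) : Comp m ↪ Comp (m + 2) :=
  ⟨fun c => (skipTwo t c.1, skipTwo t c.2), fun c c' h => by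
    simp only [Prod.mk.injEq] at h
    exact Prod.ext ((skipTwo_strictMono t).injective h.1) ((skipTwo_strictMono t).injective h.2)⟩

@[simp]
theorem skipTwoComp_apply (t : ℕ) (c : Comp m) :
    skipTwoComp t c = (skipTwo t c.1, skipTwo t c.2) := rfl

def embedLayer (d : Comp (m + 2)) (A : Layer m) : Layer (m + 2) :=
  insert d (A.map (skipTwoComp d.1.val))

noncomputable def stripLayer (d : Comp (m + 2)) (L : Layer (m + 2)) : Layer m :=
  Finset.univ.filter fun c => skipTwoComp d.1.val c ∈ L

theorem mem_stripLayer {d : Comp (m + 2)} {L : Layer (m + 2)} {c : Comp m} :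
    c ∈ stripLayer d L ↔ skipTwoComp d.1.val c ∈ L := by
  simp only [stripLayer, Finset.mem_filter, Finset.mem_univ, true_and]

theorem embedLayer_stripLayer {d : Comp (m + 2)} (hadj : d.2.val = d.1.val + 1)
    {L : Layer (m + 2)} (hL : NoOverlap L) (hd : d ∈ L) : embedLayer d (stripLayer d L) = L := by
  ext c
  simp only [embedLayer, Finset.mem_insert, Finset.mem_map, mem_stripLayer]
  refine ⟨by rintro (rfl | ⟨c₀, hc₀, rfl⟩) <;> assumption, fun hc => ?_⟩
  by_cases hcd : c = d
  · exact .inl hcd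
  have hoff := hL c hc d hd hcd
  simp only [ne_eq, Fin.ext_iff, hadj] at hoff
  have ht : d.1.val ≤ m := by have := d.2.isLt; omega
  obtain ⟨k₁, hk₁⟩ := exists_skipTwo_eq ht (k := c.1) (by omega) (by omega)
  obtain ⟨k₂, hk₂⟩ := exists_skipTwo_eq ht (k := c.2) (by omega) (by omega)
  have : skipTwoComp d.1.val (k₁, k₂) = c := by simp [hk₁, hk₂]
  exact .inr ⟨(k₁, k₂), this ▸ hc, this⟩

theorem stripLayer_FLayer {d : Comp (m + 2)} (hd : d ∈ FLayer (m + 2)) :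
    stripLayer d (FLayer (m + 2)) = FLayer m := by
  ext c
  rw [mem_stripLayer, skipTwoComp_apply, mem_FLayer, mem_FLayer]
  have := (mem_FLayer.1 hd).1
  simp only [skipTwo_val]
  split_ifs <;> omega

theorem IsLayer.stripLayer {L : Layer (m + 2)} (hL : IsLayer L) (d : Comp (m + 2)) :
    IsLayer (stripLayer d L) := by
  refine ⟨fun c hc => (skipTwo_strictMono _).lt_iff_lt.1 (hL.1 _ (mem_stripLayer.1 hc)),
    fun c hc c' hc' hne => ?_⟩
  have := hL.2 _ (mem_stripLayer.1 hc) _ (mem_stripLayer.1 hc')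
    ((skipTwoComp d.1.val).injective.ne hne)
  simp only [skipTwoComp_apply, ne_eq] at this
  refine ⟨?_, ?_, ?_, ?_⟩ <;> rintro h <;> simp_all

theorem IsLayer.embedLayer {A : Layer m} (hA : IsLayer A) {d : Comp (m + 2)}
    (hadj : d.2.val = d.1.val + 1) : IsLayer (embedLayer d A) := by
  have hoff : ∀ c ∈ A, ∀ k ∈ [d.1, d.2], ∀ c' ∈ [skipTwo d.1.val c.1, skipTwo d.1.val c.2],
      c' ≠ k := by
    intro c _ k hk c' hc'
    have h₁ := skipTwo_ne d.1.val c.1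
    have h₂ := skipTwo_ne d.1.val c.2
    simp only [List.mem_cons, List.not_mem_nil, or_false] at hk hc'
    rcases hk with rfl | rfl <;> rcases hc' with rfl | rfl <;> rw [ne_eq, Fin.ext_iff] <;> omega
  refine ⟨fun c hc => ?_, fun c hc c' hc' hne => ?_⟩
  · simp only [SN.embedLayer, Finset.mem_insert, Finset.mem_map] at hc
    rcases hc with rfl | ⟨c₀, hc₀, rfl⟩
    · exact Fin.lt_def.2 (by omega)
    · exact (skipTwo_strictMono _) (hA.1 c₀ hc₀)
  simp only [SN.embedLayer, Finset.mem_insert, Finset.mem_map] at hc hc'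
  rcases hc with rfl | ⟨c₀, hc₀, rfl⟩ <;> rcases hc' with rfl | ⟨c₀', hc₀', rfl⟩
  · exact absurd rfl hne
  · simp only [skipTwoComp_apply]
    refine ⟨?_, ?_, ?_, ?_⟩ <;> exact Ne.symm (hoff c₀' hc₀' _ (by simp) _ (by simp))
  · simp only [skipTwoComp_apply]
    refine ⟨?_, ?_, ?_, ?_⟩ <;> exact hoff c₀ hc₀ _ (by simp) _ (by simp)
  · have := hA.2 c₀ hc₀ c₀' hc₀' (fun h => hne (by rw [h]))
    simp only [skipTwoComp_apply, ne_eq, (skipTwo_strictMono _).injective.eq_iff]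
    exact this

theorem feeds_skipTwoComp_iff {t : ℕ} {b : Bool} {c c' : Comp m} :
    Feeds b (skipTwoComp t c) (skipTwoComp t c') ↔ Feeds b c c' := by
  cases b <;> simp [Feeds, outChan, (skipTwo_strictMono t).injective.eq_iff]

theorem skipTwoComp_ne (d : Comp (m + 2)) (c : Comp m) : skipTwoComp d.1.val c ≠ d :=
  fun h => (skipTwo_ne d.1.val c.1).1 (congrArg (·.1.val) h)

theorem not_feeds_skipTwoComp {d : Comp (m + 2)} (hadj : d.2.val = d.1.val + 1) (b : Bool)
    (c : Comp m) : ¬ Feeds b (skipTwoComp d.1.val c) d ∧ ¬ Feeds b d (skipTwoComp d.1.val c) := by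
  have h₁ := skipTwo_ne d.1.val c.1
  have h₂ := skipTwo_ne d.1.val c.2
  cases b <;> simp only [Feeds, outChan, skipTwoComp_apply, Bool.false_eq_true, ↓reduceIte,
    Fin.ext_iff, hadj] <;> omega

def embedVertex (d : Comp (m + 2)) (A B : Layer m) :
    (A ⊕ B) ⊕ Bool → embedLayer d A ⊕ embedLayer d B
  | .inl (.inl c) => .inl ⟨skipTwoComp d.1.val c,
      Finset.mem_insert_of_mem (Finset.mem_map_of_mem _ c.2)⟩
  | .inl (.inr c) => .inr ⟨skipTwoComp d.1.val c,
      Finset.mem_insert_of_mem (Finset.mem_map_of_mem _ c.2)⟩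
  | .inr false => .inl ⟨d, Finset.mem_insert_self _ _⟩
  | .inr true => .inr ⟨d, Finset.mem_insert_self _ _⟩

theorem embedVertex_bijective (d : Comp (m + 2)) (A B : Layer m) :
    Function.Bijective (embedVertex d A B) := by
  refine ⟨?_, ?_⟩
  · rintro ((c | c) | _ | _) ((c' | c') | _ | _) h <;>
      simp only [embedVertex, Sum.inl.injEq, Sum.inr.injEq, reduceCtorEq] at h
    all_goals first
      | rfl
      | exact congrArg _ (congrArg _ (Subtype.ext
          ((skipTwoComp d.1.val).injective (congrArg Subtype.val h))))
      | exact absurd (congrArg Subtype.val h) (skipTwoComp_ne d _)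
      | exact absurd (congrArg Subtype.val h).symm (skipTwoComp_ne d _)
  · rintro (⟨c, hc⟩ | ⟨c, hc⟩) <;>
      simp only [embedLayer, Finset.mem_insert, Finset.mem_map] at hc <;>
      rcases hc with rfl | ⟨c₀, hc₀, rfl⟩
    exacts [⟨.inr false, rfl⟩, ⟨.inl (.inl ⟨c₀, hc₀⟩), rfl⟩, ⟨.inr true, rfl⟩,
      ⟨.inl (.inr ⟨c₀, hc₀⟩), rfl⟩]

theorem labeledIso_addDoubleEdge_embedLayer {d : Comp (m + 2)} (hadj : d.2.val = d.1.val + 1)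
    (A B : Layer m) : LabeledIso (addDoubleEdge (twoLayerGraph A B))
      (twoLayerGraph (embedLayer d A) (embedLayer d B)) := by
  refine ⟨Equiv.ofBijective _ (embedVertex_bijective d A B), fun b x y => ?_⟩
  change _ ↔ twoLayerGraph _ _ b (embedVertex d A B x) (embedVertex d A B y)
  rcases x with (c | c) | _ | _ <;> rcases y with (c' | c') | _ | _ <;>
    simp only [embedVertex, addDoubleEdge, twoLayerGraph]
  · exact feeds_skipTwoComp_iff.symm
  · exact iff_of_false id (not_feeds_skipTwoComp hadj b _).1
  · exact iff_of_false id (not_feeds_skipTwoComp hadj b _).2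
  · exact iff_of_true trivial (by cases b <;> simp [Feeds, outChan])

end SkipPair

def quotEquivOfInverse {α β : Type*} {r : α → α → Prop} {s : β → β → Prop} (f : α → β)
    (g : β → α) (hf : ∀ a a', r a a' → s (f a) (f a')) (hg : ∀ b b', s b b' → r (g b) (g b'))
    (hgf : ∀ a, r (g (f a)) a) (hfg : ∀ b, s (f (g b)) b) : Quot r ≃ Quot s where
  toFun := Quot.map f hf
  invFun := Quot.map g hg
  left_inv := Quot.ind fun a => Quot.sound (hgf a)
  right_inv := Quot.ind fun b => Quot.sound (hfg b)

section Classes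

variable {m : ℕ}

theorem labeledIso_addDoubleEdge_FLayer_embedLayer {d : Comp (m + 2)}
    (hd : d ∈ FLayer (m + 2)) (M : Layer m) :
    LabeledIso (addDoubleEdge (twoLayerGraph (FLayer m) M))
      (twoLayerGraph (FLayer (m + 2)) (embedLayer d M)) := by
  have hadj := (mem_FLayer.1 hd).2
  have hF : embedLayer d (FLayer m) = FLayer (m + 2) := by
    rw [← stripLayer_FLayer hd, embedLayer_stripLayer hadj FLayer_isLayer.2 hd]
  have := labeledIso_addDoubleEdge_embedLayer hadj (FLayer m) M
  rwa [hF] at this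

theorem labeledIso_addDoubleEdge_FLayer_stripLayer {L : Layer (m + 2)} (hL : IsLayer L)
    {d : Comp (m + 2)} (hdF : d ∈ FLayer (m + 2)) (hdL : d ∈ L) :
    LabeledIso (addDoubleEdge (twoLayerGraph (FLayer m) (stripLayer d L)))
      (twoLayerGraph (FLayer (m + 2)) L) := by
  have := labeledIso_addDoubleEdge_FLayer_embedLayer hdF (stripLayer d L)
  rwa [embedLayer_stripLayer (mem_FLayer.1 hdF).2 hL.2 hdL] at this

theorem exists_mem_FLayer_of_redLayers (L : RedLayers (m + 2)) :
    ∃ d ∈ FLayer (m + 2), d ∈ L.val :=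
  (redundant_FLayer_iff L.2.1).1 L.2.2

noncomputable def stripRed (L : RedLayers (m + 2)) : SecondLayers m :=
  ⟨stripLayer (exists_mem_FLayer_of_redLayers L).choose L.val, L.2.1.stripLayer _⟩

theorem labeledIso_addDoubleEdge_stripRed (L : RedLayers (m + 2)) :
    LabeledIso (addDoubleEdge (twoLayerGraph (FLayer m) (stripRed L).val))
      (twoLayerGraph (FLayer (m + 2)) L.val) :=
  labeledIso_addDoubleEdge_FLayer_stripLayer L.2.1
    (exists_mem_FLayer_of_redLayers L).choose_spec.1
    (exists_mem_FLayer_of_redLayers L).choose_spec.2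

def firstPair : Comp (m + 2) := (⟨0, by omega⟩, ⟨1, by omega⟩)

theorem firstPair_mem_FLayer : (firstPair : Comp (m + 2)) ∈ FLayer (m + 2) :=
  mem_FLayer.2 ⟨rfl, rfl⟩

def embedRed (M : SecondLayers m) : RedLayers (m + 2) :=
  ⟨embedLayer firstPair M.val, M.2.embedLayer rfl, redundant_of_mem FLayer_isLayer.isGenLayer
    (M.2.embedLayer rfl).isGenLayer firstPair_mem_FLayer (Finset.mem_insert_self _ _)⟩

theorem labeledIso_addDoubleEdge_embedRed (M : SecondLayers m) :
    LabeledIso (addDoubleEdge (twoLayerGraph (FLayer m) M.val))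
      (twoLayerGraph (FLayer (m + 2)) (embedRed M).val) :=
  labeledIso_addDoubleEdge_FLayer_embedLayer firstPair_mem_FLayer M.val

theorem graphIso_stripRed {L L' : RedLayers (m + 2)}
    (h : GraphIso ([FLayer (m + 2), L.val] : Net (m + 2)) [FLayer (m + 2), L'.val]) :
    GraphIso ([FLayer m, (stripRed L).val] : Net m) [FLayer m, (stripRed L').val] := by
  rw [graphIso_iff_labeledIso] at h ⊢
  exact labeledIso_of_addDoubleEdge
    (twoLayerGraph_doubleEdgesIsolated FLayer_isLayer (stripRed L').2)
    (((labeledIso_addDoubleEdge_stripRed L).trans h).trans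
      (labeledIso_addDoubleEdge_stripRed L').symm)

theorem graphIso_embedRed {M M' : SecondLayers m}
    (h : GraphIso ([FLayer m, M.val] : Net m) [FLayer m, M'.val]) :
    GraphIso ([FLayer (m + 2), (embedRed M).val] : Net (m + 2))
      [FLayer (m + 2), (embedRed M').val] := by
  rw [graphIso_iff_labeledIso] at h ⊢
  exact ((labeledIso_addDoubleEdge_embedRed M).symm.trans h.addDoubleEdge).trans
    (labeledIso_addDoubleEdge_embedRed M')

theorem graphIso_embedRed_stripRed (L : RedLayers (m + 2)) :
    GraphIso ([FLayer (m + 2), (embedRed (stripRed L)).val] : Net (m + 2))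
      [FLayer (m + 2), L.val] := by
  rw [graphIso_iff_labeledIso]
  exact (labeledIso_addDoubleEdge_embedRed _).symm.trans (labeledIso_addDoubleEdge_stripRed L)

theorem graphIso_stripRed_embedRed (M : SecondLayers m) :
    GraphIso ([FLayer m, (stripRed (embedRed M)).val] : Net m) [FLayer m, M.val] := by
  rw [graphIso_iff_labeledIso]
  exact labeledIso_of_addDoubleEdge (twoLayerGraph_doubleEdgesIsolated FLayer_isLayer M.2)
    ((labeledIso_addDoubleEdge_stripRed _).trans (labeledIso_addDoubleEdge_embedRed M).symm)

end Classes

/-- for n ≥ 5, the number of equivalence classes of redundant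
two-layer networks on n channels with first layer `F_n` equals
`|R(G_{n-2})|`. -/
theorem numRedClasses_eq (n : ℕ) (h5 : 5 ≤ n) :
    numRedClasses n = numClasses (n - 2) := by
  obtain ⟨m, rfl⟩ : ∃ m, n = m + 2 := ⟨n - 2, by omega⟩
  rw [Nat.add_sub_cancel]
  exact Nat.card_congr (quotEquivOfInverse stripRed embedRed (fun _ _ => graphIso_stripRed)
    (fun _ _ => graphIso_embedRed) graphIso_embedRed_stripRed graphIso_stripRed_embedRed)

end SN
end
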